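/- arXiv:1712.06155 — 2 statements merged into one kernel-verified Lean document; each statement's English description precedes it below -/
import Mathlib

section
/- There exist a GC_3 set X ⊂ ℝ² (a 3-poised set of 10 nodes whose fundamental polynomials are products of 3 linear factors) and a line ℓ passing through exactly 3 nodes of X such that no node of X uses ℓ, i.e., X_ℓ = ∅. -/
open MvPolynomial

/-- Points of the plane `ℝ²`. -/
abbrev Pt : Type := Fin 2 → ℝ

/-- Bivariate real polynomials. -/
abbrev BPoly : Type := MvPolynomial (Fin 2) ℝ

/-- `X` is an `n`-poised node set: it has `N = (n+1)(n+2)/2` nodes and every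
interpolation problem with polynomials of total degree at most `n` has a unique solution. -/
def IsPoised (n : ℕ) (X : Set Pt) : Prop :=
  X.ncard = (n + 1) * (n + 2) / 2 ∧
  ∀ c : Pt → ℝ, ∃! p : BPoly, p.totalDegree ≤ n ∧ ∀ A ∈ X, eval A p = c A

/-- `p` is an `n`-fundamental polynomial of the node `A` for the node set `X`. -/
def IsFund (n : ℕ) (X : Set Pt) (A : Pt) (p : BPoly) : Prop :=
  p.totalDegree ≤ n ∧ eval A p = 1 ∧ ∀ B ∈ X, B ≠ A → eval B p = 0

/-- `X` is a `GC_n` set: it is `n`-poised and each node has a fundamental polynomial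
that is a product of `n` polynomials of degree `1`. -/
def IsGC (n : ℕ) (X : Set Pt) : Prop :=
  IsPoised n X ∧
  ∀ A ∈ X, ∃ p : BPoly, IsFund n X A p ∧
    ∃ f : Fin n → BPoly, (∀ i, (f i).totalDegree = 1) ∧ p = ∏ i, f i

/-- A line is the zero set of a polynomial of degree exactly `1`. -/
def IsLine (L : Set Pt) : Prop :=
  ∃ f : BPoly, f.totalDegree = 1 ∧ L = {x : Pt | eval x f = 0}

/-- A `k`-node line of `X`: a line passing through exactly `k` nodes of `X`. -/
def IsNodeLine (k : ℕ) (X : Set Pt) (L : Set Pt) : Prop :=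
  IsLine L ∧ (X ∩ L).ncard = k

/-- A maximal line of an `n`-poised set `X`: an `(n+1)`-node line. -/
def IsMaxLine (n : ℕ) (X : Set Pt) (L : Set Pt) : Prop :=
  IsNodeLine (n + 1) X L

/-- The node `A` uses the line `L`: a degree-1 polynomial whose zero set is `L`
divides the `n`-fundamental polynomial of `A` with respect to `X`. -/
def Uses (n : ℕ) (X : Set Pt) (L : Set Pt) (A : Pt) : Prop :=
  ∃ p f : BPoly, IsFund n X A p ∧ f.totalDegree = 1 ∧ L = {x : Pt | eval x f = 0} ∧ f ∣ p

/-- `X_ℓ`: the set of nodes of `X` that use the line `L`. -/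
def UseSet (n : ℕ) (X : Set Pt) (L : Set Pt) : Set Pt :=
  {A ∈ X | Uses n X L A}


noncomputable section AuxGC3

namespace AuxGC3

noncomputable def lin (α β γ : ℝ) : BPoly := C α * X 0 + C β * X 1 + C γ

lemma eval_lin (x : Pt) (α β γ : ℝ) : eval x (lin α β γ) = α * x 0 + β * x 1 + γ := by
  simp [lin]

lemma lin_deg_le (α β γ : ℝ) : (lin α β γ).totalDegree ≤ 1 := by
  unfold lin
  refine le_trans (totalDegree_add _ _) (max_le (le_trans (totalDegree_add _ _) (max_le ?_ ?_)) ?_)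
  · exact le_trans (totalDegree_mul _ _) (by simp [totalDegree_C, totalDegree_X])
  · exact le_trans (totalDegree_mul _ _) (by simp [totalDegree_C, totalDegree_X])
  · simp [totalDegree_C]

lemma coeff_lin_X0 (α β γ : ℝ) : coeff (Finsupp.single 0 1) (lin α β γ) = α := by
  simp [lin, coeff_X', Finsupp.single_eq_single_iff, eq_comm, Finsupp.single_eq_zero]

lemma coeff_lin_X1 (α β γ : ℝ) : coeff (Finsupp.single 1 1) (lin α β γ) = β := by
  simp [lin, coeff_X', Finsupp.single_eq_single_iff, eq_comm, Finsupp.single_eq_zero]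

lemma lin_deg1_of_left (α β γ : ℝ) (h : α ≠ 0) : (lin α β γ).totalDegree = 1 := by
  refine le_antisymm (lin_deg_le _ _ _) ?_
  have hmem : (Finsupp.single 0 1 : Fin 2 →₀ ℕ) ∈ (lin α β γ).support := by
    simp [mem_support_iff, coeff_lin_X0, h]
  simpa using le_totalDegree hmem

lemma lin_deg1_of_right (α β γ : ℝ) (h : β ≠ 0) : (lin α β γ).totalDegree = 1 := by
  refine le_antisymm (lin_deg_le _ _ _) ?_
  have hmem : (Finsupp.single 1 1 : Fin 2 →₀ ℕ) ∈ (lin α β γ).support := by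
    simp [mem_support_iff, coeff_lin_X1, h]
  simpa using le_totalDegree hmem

lemma deg3 (l1 l2 l3 : BPoly) (h1 : l1.totalDegree ≤ 1) (h2 : l2.totalDegree ≤ 1)
    (h3 : l3.totalDegree ≤ 1) : (l1 * l2 * l3).totalDegree ≤ 3 := by
  refine le_trans (totalDegree_mul _ _) ?_
  have := le_trans (totalDegree_mul l1 l2) (add_le_add h1 h2)
  omega

noncomputable def mon (a b : ℕ) : Fin 2 →₀ ℕ := Finsupp.single 0 a + Finsupp.single 1 b

@[simp] lemma mon_apply0 (a b : ℕ) : mon a b 0 = a := by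
  simp [mon, Finsupp.single_apply]

@[simp] lemma mon_apply1 (a b : ℕ) : mon a b 1 = b := by
  simp [mon, Finsupp.single_apply]

lemma mon_inj {a b c d : ℕ} : mon a b = mon c d ↔ a = c ∧ b = d := by
  constructor
  · intro h
    exact ⟨by simpa using DFunLike.congr_fun h 0, by simpa using DFunLike.congr_fun h 1⟩
  · rintro ⟨rfl, rfl⟩; rfl

lemma decomp (d : Fin 2 →₀ ℕ) : d = mon (d 0) (d 1) := by
  ext i
  fin_cases i <;> simp

lemma degsum (d : Fin 2 →₀ ℕ) : ∑ i ∈ d.support, d i = d 0 + d 1 := by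
  rw [Finset.sum_subset (Finset.subset_univ d.support)]
  · exact Fin.sum_univ_two d
  · intro x _ hx
    simpa using hx

lemma eval_mon (x : Pt) (a b : ℕ) (c : ℝ) :
    eval x (monomial (mon a b) c) = c * x 0 ^ a * x 1 ^ b := by
  rw [eval_monomial, mon]
  rw [Finsupp.prod_add_index' (by simp) (by intro a b1 b2; rw [pow_add])]
  rw [Finsupp.prod_single_index (by simp), Finsupp.prod_single_index (by simp)]
  ring

noncomputable def Q (p : BPoly) : BPoly :=
  monomial (mon 0 0) (coeff (mon 0 0) p) +
  monomial (mon 0 1) (coeff (mon 0 1) p) +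
  monomial (mon 0 2) (coeff (mon 0 2) p) +
  monomial (mon 0 3) (coeff (mon 0 3) p) +
  monomial (mon 1 0) (coeff (mon 1 0) p) +
  monomial (mon 1 1) (coeff (mon 1 1) p) +
  monomial (mon 1 2) (coeff (mon 1 2) p) +
  monomial (mon 2 0) (coeff (mon 2 0) p) +
  monomial (mon 2 1) (coeff (mon 2 1) p) +
  monomial (mon 3 0) (coeff (mon 3 0) p)

lemma coeff_Q (p : BPoly) (hd : p.totalDegree ≤ 3) (a b : ℕ) :
    coeff (mon a b) p = coeff (mon a b) (Q p) := by
  by_cases h : a + b ≤ 3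
  · have ha : a ≤ 3 := by omega
    have hb : b ≤ 3 := by omega
    interval_cases a <;> interval_cases b <;>
      first
      | omega
      | (simp [Q, coeff_add, coeff_monomial, mon_inj])
  · push_neg at h
    have h1 : coeff (mon a b) p = 0 := by
      apply coeff_eq_zero_of_totalDegree_lt
      calc p.totalDegree ≤ 3 := hd
        _ < a + b := h
        _ = ∑ i ∈ (mon a b).support, (mon a b) i := by rw [degsum]; simp
    rw [h1]
    symm
    simp only [Q, coeff_add, coeff_monomial]
    rw [if_neg (by rw [mon_inj]; omega)]
    rw [if_neg (by rw [mon_inj]; omega)]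
    rw [if_neg (by rw [mon_inj]; omega)]
    rw [if_neg (by rw [mon_inj]; omega)]
    rw [if_neg (by rw [mon_inj]; omega)]
    rw [if_neg (by rw [mon_inj]; omega)]
    rw [if_neg (by rw [mon_inj]; omega)]
    rw [if_neg (by rw [mon_inj]; omega)]
    rw [if_neg (by rw [mon_inj]; omega)]
    rw [if_neg (by rw [mon_inj]; omega)]
    norm_num

lemma expand (p : BPoly) (hd : p.totalDegree ≤ 3) : p = Q p := by
  ext m
  have := coeff_Q p hd (m 0) (m 1)
  rwa [← decomp m] at this
noncomputable def P0 : Pt := ![(2/5 : ℝ), (2/5 : ℝ)]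
noncomputable def P1 : Pt := ![(4/7 : ℝ), (4/7 : ℝ)]
noncomputable def P2 : Pt := ![(8/17 : ℝ), (8/17 : ℝ)]
noncomputable def P3 : Pt := ![(16/31 : ℝ), (16/31 : ℝ)]
noncomputable def P4 : Pt := ![(4 : ℝ), ((-2) : ℝ)]
noncomputable def P5 : Pt := ![(8/5 : ℝ), ((-4)/5 : ℝ)]
noncomputable def P6 : Pt := ![(16/7 : ℝ), ((-8)/7 : ℝ)]
noncomputable def P7 : Pt := ![(8/11 : ℝ), (2/11 : ℝ)]
noncomputable def P8 : Pt := ![(16/19 : ℝ), (4/19 : ℝ)]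
noncomputable def P9 : Pt := ![(16/13 : ℝ), ((-2)/13 : ℝ)]
noncomputable def zst : Pt := ![(0 : ℝ), (4/5 : ℝ)]
lemma ne_0_1 : P0 ≠ P1 := by
  intro h
  have := congrFun h 0
  norm_num [P0, P1] at this
lemma ne_0_2 : P0 ≠ P2 := by
  intro h
  have := congrFun h 0
  norm_num [P0, P2] at this
lemma ne_0_3 : P0 ≠ P3 := by
  intro h
  have := congrFun h 0
  norm_num [P0, P3] at this
lemma ne_0_4 : P0 ≠ P4 := by
  intro h
  have := congrFun h 0
  norm_num [P0, P4] at this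
lemma ne_0_5 : P0 ≠ P5 := by
  intro h
  have := congrFun h 0
  norm_num [P0, P5] at this
lemma ne_0_6 : P0 ≠ P6 := by
  intro h
  have := congrFun h 0
  norm_num [P0, P6] at this
lemma ne_0_7 : P0 ≠ P7 := by
  intro h
  have := congrFun h 0
  norm_num [P0, P7] at this
lemma ne_0_8 : P0 ≠ P8 := by
  intro h
  have := congrFun h 0
  norm_num [P0, P8] at this
lemma ne_0_9 : P0 ≠ P9 := by
  intro h
  have := congrFun h 0
  norm_num [P0, P9] at this
lemma ne_1_2 : P1 ≠ P2 := by
  intro h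
  have := congrFun h 0
  norm_num [P1, P2] at this
lemma ne_1_3 : P1 ≠ P3 := by
  intro h
  have := congrFun h 0
  norm_num [P1, P3] at this
lemma ne_1_4 : P1 ≠ P4 := by
  intro h
  have := congrFun h 0
  norm_num [P1, P4] at this
lemma ne_1_5 : P1 ≠ P5 := by
  intro h
  have := congrFun h 0
  norm_num [P1, P5] at this
lemma ne_1_6 : P1 ≠ P6 := by
  intro h
  have := congrFun h 0
  norm_num [P1, P6] at this
lemma ne_1_7 : P1 ≠ P7 := by
  intro h
  have := congrFun h 0
  norm_num [P1, P7] at this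
lemma ne_1_8 : P1 ≠ P8 := by
  intro h
  have := congrFun h 0
  norm_num [P1, P8] at this
lemma ne_1_9 : P1 ≠ P9 := by
  intro h
  have := congrFun h 0
  norm_num [P1, P9] at this
lemma ne_2_3 : P2 ≠ P3 := by
  intro h
  have := congrFun h 0
  norm_num [P2, P3] at this
lemma ne_2_4 : P2 ≠ P4 := by
  intro h
  have := congrFun h 0
  norm_num [P2, P4] at this
lemma ne_2_5 : P2 ≠ P5 := by
  intro h
  have := congrFun h 0
  norm_num [P2, P5] at this
lemma ne_2_6 : P2 ≠ P6 := by
  intro h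
  have := congrFun h 0
  norm_num [P2, P6] at this
lemma ne_2_7 : P2 ≠ P7 := by
  intro h
  have := congrFun h 0
  norm_num [P2, P7] at this
lemma ne_2_8 : P2 ≠ P8 := by
  intro h
  have := congrFun h 0
  norm_num [P2, P8] at this
lemma ne_2_9 : P2 ≠ P9 := by
  intro h
  have := congrFun h 0
  norm_num [P2, P9] at this
lemma ne_3_4 : P3 ≠ P4 := by
  intro h
  have := congrFun h 0
  norm_num [P3, P4] at this
lemma ne_3_5 : P3 ≠ P5 := by
  intro h
  have := congrFun h 0
  norm_num [P3, P5] at this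
lemma ne_3_6 : P3 ≠ P6 := by
  intro h
  have := congrFun h 0
  norm_num [P3, P6] at this
lemma ne_3_7 : P3 ≠ P7 := by
  intro h
  have := congrFun h 0
  norm_num [P3, P7] at this
lemma ne_3_8 : P3 ≠ P8 := by
  intro h
  have := congrFun h 0
  norm_num [P3, P8] at this
lemma ne_3_9 : P3 ≠ P9 := by
  intro h
  have := congrFun h 0
  norm_num [P3, P9] at this
lemma ne_4_5 : P4 ≠ P5 := by
  intro h
  have := congrFun h 0
  norm_num [P4, P5] at this
lemma ne_4_6 : P4 ≠ P6 := by
  intro h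
  have := congrFun h 0
  norm_num [P4, P6] at this
lemma ne_4_7 : P4 ≠ P7 := by
  intro h
  have := congrFun h 0
  norm_num [P4, P7] at this
lemma ne_4_8 : P4 ≠ P8 := by
  intro h
  have := congrFun h 0
  norm_num [P4, P8] at this
lemma ne_4_9 : P4 ≠ P9 := by
  intro h
  have := congrFun h 0
  norm_num [P4, P9] at this
lemma ne_5_6 : P5 ≠ P6 := by
  intro h
  have := congrFun h 0
  norm_num [P5, P6] at this
lemma ne_5_7 : P5 ≠ P7 := by
  intro h
  have := congrFun h 0
  norm_num [P5, P7] at this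
lemma ne_5_8 : P5 ≠ P8 := by
  intro h
  have := congrFun h 0
  norm_num [P5, P8] at this
lemma ne_5_9 : P5 ≠ P9 := by
  intro h
  have := congrFun h 0
  norm_num [P5, P9] at this
lemma ne_6_7 : P6 ≠ P7 := by
  intro h
  have := congrFun h 0
  norm_num [P6, P7] at this
lemma ne_6_8 : P6 ≠ P8 := by
  intro h
  have := congrFun h 0
  norm_num [P6, P8] at this
lemma ne_6_9 : P6 ≠ P9 := by
  intro h
  have := congrFun h 0
  norm_num [P6, P9] at this
lemma ne_7_8 : P7 ≠ P8 := by
  intro h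
  have := congrFun h 0
  norm_num [P7, P8] at this
lemma ne_7_9 : P7 ≠ P9 := by
  intro h
  have := congrFun h 0
  norm_num [P7, P9] at this
lemma ne_8_9 : P8 ≠ P9 := by
  intro h
  have := congrFun h 0
  norm_num [P8, P9] at this
noncomputable def q0 : BPoly := lin (625/216 : ℝ) (250/81 : ℝ) ((-250)/81 : ℝ) * lin (9 : ℝ) (8 : ℝ) ((-8) : ℝ) * lin ((-3) : ℝ) ((-4) : ℝ) (4 : ℝ)
noncomputable def q1 : BPoly := lin ((-343)/432 : ℝ) ((-343)/288 : ℝ) (343/432 : ℝ) * lin ((-15) : ℝ) ((-16) : ℝ) (16 : ℝ) * lin (9 : ℝ) (8 : ℝ) ((-8) : ℝ)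
noncomputable def q2 : BPoly := lin ((-4913)/864 : ℝ) ((-4913)/576 : ℝ) (4913/864 : ℝ) * lin (4 : ℝ) (3 : ℝ) ((-4) : ℝ) * lin ((-15) : ℝ) ((-16) : ℝ) (16 : ℝ)
noncomputable def q3 : BPoly := lin ((-29791)/2592 : ℝ) ((-29791)/1728 : ℝ) (29791/2592 : ℝ) * lin (4 : ℝ) (3 : ℝ) ((-4) : ℝ) * lin (8 : ℝ) (9 : ℝ) ((-8) : ℝ)
noncomputable def q4 : BPoly := lin ((-1)/864 : ℝ) (1/864 : ℝ) (0 : ℝ) * lin ((-15) : ℝ) ((-16) : ℝ) (16 : ℝ) * lin (9 : ℝ) (8 : ℝ) ((-8) : ℝ)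
noncomputable def q5 : BPoly := lin ((-125)/1728 : ℝ) (125/1728 : ℝ) (0 : ℝ) * lin (2 : ℝ) (3 : ℝ) ((-2) : ℝ) * lin ((-15) : ℝ) ((-16) : ℝ) (16 : ℝ)
noncomputable def q6 : BPoly := lin ((-343)/1728 : ℝ) (343/1728 : ℝ) (0 : ℝ) * lin (2 : ℝ) (3 : ℝ) ((-2) : ℝ) * lin (4 : ℝ) (3 : ℝ) ((-4) : ℝ)
noncomputable def q7 : BPoly := lin (1331/1728 : ℝ) ((-1331)/1728 : ℝ) (0 : ℝ) * lin (1 : ℝ) (2 : ℝ) (0 : ℝ) * lin ((-15) : ℝ) ((-16) : ℝ) (16 : ℝ)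
noncomputable def q8 : BPoly := lin (6859/1728 : ℝ) ((-6859)/1728 : ℝ) (0 : ℝ) * lin (1 : ℝ) (2 : ℝ) (0 : ℝ) * lin (2 : ℝ) (3 : ℝ) ((-2) : ℝ)
noncomputable def q9 : BPoly := lin ((-2197)/5184 : ℝ) (2197/5184 : ℝ) (0 : ℝ) * lin (1 : ℝ) (2 : ℝ) (0 : ℝ) * lin ((-1) : ℝ) (4 : ℝ) (0 : ℝ)
lemma qdeg0 : q0.totalDegree ≤ 3 :=
  deg3 _ _ _ (lin_deg_le _ _ _) (lin_deg_le _ _ _) (lin_deg_le _ _ _)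
lemma qdeg1 : q1.totalDegree ≤ 3 :=
  deg3 _ _ _ (lin_deg_le _ _ _) (lin_deg_le _ _ _) (lin_deg_le _ _ _)
lemma qdeg2 : q2.totalDegree ≤ 3 :=
  deg3 _ _ _ (lin_deg_le _ _ _) (lin_deg_le _ _ _) (lin_deg_le _ _ _)
lemma qdeg3 : q3.totalDegree ≤ 3 :=
  deg3 _ _ _ (lin_deg_le _ _ _) (lin_deg_le _ _ _) (lin_deg_le _ _ _)
lemma qdeg4 : q4.totalDegree ≤ 3 :=
  deg3 _ _ _ (lin_deg_le _ _ _) (lin_deg_le _ _ _) (lin_deg_le _ _ _)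
lemma qdeg5 : q5.totalDegree ≤ 3 :=
  deg3 _ _ _ (lin_deg_le _ _ _) (lin_deg_le _ _ _) (lin_deg_le _ _ _)
lemma qdeg6 : q6.totalDegree ≤ 3 :=
  deg3 _ _ _ (lin_deg_le _ _ _) (lin_deg_le _ _ _) (lin_deg_le _ _ _)
lemma qdeg7 : q7.totalDegree ≤ 3 :=
  deg3 _ _ _ (lin_deg_le _ _ _) (lin_deg_le _ _ _) (lin_deg_le _ _ _)
lemma qdeg8 : q8.totalDegree ≤ 3 :=
  deg3 _ _ _ (lin_deg_le _ _ _) (lin_deg_le _ _ _) (lin_deg_le _ _ _)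
lemma qdeg9 : q9.totalDegree ≤ 3 :=
  deg3 _ _ _ (lin_deg_le _ _ _) (lin_deg_le _ _ _) (lin_deg_le _ _ _)
lemma ev_0_0 : eval P0 q0 = 1 := by
  simp only [q0, map_mul, eval_lin, P0, Matrix.cons_val_zero, Matrix.cons_val_one, Matrix.head_cons]
  norm_num
lemma ev_0_1 : eval P1 q0 = 0 := by
  simp only [q0, map_mul, eval_lin, P1, Matrix.cons_val_zero, Matrix.cons_val_one, Matrix.head_cons]
  norm_num
lemma ev_0_2 : eval P2 q0 = 0 := by
  simp only [q0, map_mul, eval_lin, P2, Matrix.cons_val_zero, Matrix.cons_val_one, Matrix.head_cons]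
  norm_num
lemma ev_0_3 : eval P3 q0 = 0 := by
  simp only [q0, map_mul, eval_lin, P3, Matrix.cons_val_zero, Matrix.cons_val_one, Matrix.head_cons]
  norm_num
lemma ev_0_4 : eval P4 q0 = 0 := by
  simp only [q0, map_mul, eval_lin, P4, Matrix.cons_val_zero, Matrix.cons_val_one, Matrix.head_cons]
  norm_num
lemma ev_0_5 : eval P5 q0 = 0 := by
  simp only [q0, map_mul, eval_lin, P5, Matrix.cons_val_zero, Matrix.cons_val_one, Matrix.head_cons]
  norm_num
lemma ev_0_6 : eval P6 q0 = 0 := by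
  simp only [q0, map_mul, eval_lin, P6, Matrix.cons_val_zero, Matrix.cons_val_one, Matrix.head_cons]
  norm_num
lemma ev_0_7 : eval P7 q0 = 0 := by
  simp only [q0, map_mul, eval_lin, P7, Matrix.cons_val_zero, Matrix.cons_val_one, Matrix.head_cons]
  norm_num
lemma ev_0_8 : eval P8 q0 = 0 := by
  simp only [q0, map_mul, eval_lin, P8, Matrix.cons_val_zero, Matrix.cons_val_one, Matrix.head_cons]
  norm_num
lemma ev_0_9 : eval P9 q0 = 0 := by
  simp only [q0, map_mul, eval_lin, P9, Matrix.cons_val_zero, Matrix.cons_val_one, Matrix.head_cons]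
  norm_num
lemma ev_1_0 : eval P0 q1 = 0 := by
  simp only [q1, map_mul, eval_lin, P0, Matrix.cons_val_zero, Matrix.cons_val_one, Matrix.head_cons]
  norm_num
lemma ev_1_1 : eval P1 q1 = 1 := by
  simp only [q1, map_mul, eval_lin, P1, Matrix.cons_val_zero, Matrix.cons_val_one, Matrix.head_cons]
  norm_num
lemma ev_1_2 : eval P2 q1 = 0 := by
  simp only [q1, map_mul, eval_lin, P2, Matrix.cons_val_zero, Matrix.cons_val_one, Matrix.head_cons]
  norm_num
lemma ev_1_3 : eval P3 q1 = 0 := by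
  simp only [q1, map_mul, eval_lin, P3, Matrix.cons_val_zero, Matrix.cons_val_one, Matrix.head_cons]
  norm_num
lemma ev_1_4 : eval P4 q1 = 0 := by
  simp only [q1, map_mul, eval_lin, P4, Matrix.cons_val_zero, Matrix.cons_val_one, Matrix.head_cons]
  norm_num
lemma ev_1_5 : eval P5 q1 = 0 := by
  simp only [q1, map_mul, eval_lin, P5, Matrix.cons_val_zero, Matrix.cons_val_one, Matrix.head_cons]
  norm_num
lemma ev_1_6 : eval P6 q1 = 0 := by
  simp only [q1, map_mul, eval_lin, P6, Matrix.cons_val_zero, Matrix.cons_val_one, Matrix.head_cons]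
  norm_num
lemma ev_1_7 : eval P7 q1 = 0 := by
  simp only [q1, map_mul, eval_lin, P7, Matrix.cons_val_zero, Matrix.cons_val_one, Matrix.head_cons]
  norm_num
lemma ev_1_8 : eval P8 q1 = 0 := by
  simp only [q1, map_mul, eval_lin, P8, Matrix.cons_val_zero, Matrix.cons_val_one, Matrix.head_cons]
  norm_num
lemma ev_1_9 : eval P9 q1 = 0 := by
  simp only [q1, map_mul, eval_lin, P9, Matrix.cons_val_zero, Matrix.cons_val_one, Matrix.head_cons]
  norm_num
lemma ev_2_0 : eval P0 q2 = 0 := by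
  simp only [q2, map_mul, eval_lin, P0, Matrix.cons_val_zero, Matrix.cons_val_one, Matrix.head_cons]
  norm_num
lemma ev_2_1 : eval P1 q2 = 0 := by
  simp only [q2, map_mul, eval_lin, P1, Matrix.cons_val_zero, Matrix.cons_val_one, Matrix.head_cons]
  norm_num
lemma ev_2_2 : eval P2 q2 = 1 := by
  simp only [q2, map_mul, eval_lin, P2, Matrix.cons_val_zero, Matrix.cons_val_one, Matrix.head_cons]
  norm_num
lemma ev_2_3 : eval P3 q2 = 0 := by
  simp only [q2, map_mul, eval_lin, P3, Matrix.cons_val_zero, Matrix.cons_val_one, Matrix.head_cons]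
  norm_num
lemma ev_2_4 : eval P4 q2 = 0 := by
  simp only [q2, map_mul, eval_lin, P4, Matrix.cons_val_zero, Matrix.cons_val_one, Matrix.head_cons]
  norm_num
lemma ev_2_5 : eval P5 q2 = 0 := by
  simp only [q2, map_mul, eval_lin, P5, Matrix.cons_val_zero, Matrix.cons_val_one, Matrix.head_cons]
  norm_num
lemma ev_2_6 : eval P6 q2 = 0 := by
  simp only [q2, map_mul, eval_lin, P6, Matrix.cons_val_zero, Matrix.cons_val_one, Matrix.head_cons]
  norm_num
lemma ev_2_7 : eval P7 q2 = 0 := by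
  simp only [q2, map_mul, eval_lin, P7, Matrix.cons_val_zero, Matrix.cons_val_one, Matrix.head_cons]
  norm_num
lemma ev_2_8 : eval P8 q2 = 0 := by
  simp only [q2, map_mul, eval_lin, P8, Matrix.cons_val_zero, Matrix.cons_val_one, Matrix.head_cons]
  norm_num
lemma ev_2_9 : eval P9 q2 = 0 := by
  simp only [q2, map_mul, eval_lin, P9, Matrix.cons_val_zero, Matrix.cons_val_one, Matrix.head_cons]
  norm_num
lemma ev_3_0 : eval P0 q3 = 0 := by
  simp only [q3, map_mul, eval_lin, P0, Matrix.cons_val_zero, Matrix.cons_val_one, Matrix.head_cons]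
  norm_num
lemma ev_3_1 : eval P1 q3 = 0 := by
  simp only [q3, map_mul, eval_lin, P1, Matrix.cons_val_zero, Matrix.cons_val_one, Matrix.head_cons]
  norm_num
lemma ev_3_2 : eval P2 q3 = 0 := by
  simp only [q3, map_mul, eval_lin, P2, Matrix.cons_val_zero, Matrix.cons_val_one, Matrix.head_cons]
  norm_num
lemma ev_3_3 : eval P3 q3 = 1 := by
  simp only [q3, map_mul, eval_lin, P3, Matrix.cons_val_zero, Matrix.cons_val_one, Matrix.head_cons]
  norm_num
lemma ev_3_4 : eval P4 q3 = 0 := by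
  simp only [q3, map_mul, eval_lin, P4, Matrix.cons_val_zero, Matrix.cons_val_one, Matrix.head_cons]
  norm_num
lemma ev_3_5 : eval P5 q3 = 0 := by
  simp only [q3, map_mul, eval_lin, P5, Matrix.cons_val_zero, Matrix.cons_val_one, Matrix.head_cons]
  norm_num
lemma ev_3_6 : eval P6 q3 = 0 := by
  simp only [q3, map_mul, eval_lin, P6, Matrix.cons_val_zero, Matrix.cons_val_one, Matrix.head_cons]
  norm_num
lemma ev_3_7 : eval P7 q3 = 0 := by
  simp only [q3, map_mul, eval_lin, P7, Matrix.cons_val_zero, Matrix.cons_val_one, Matrix.head_cons]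
  norm_num
lemma ev_3_8 : eval P8 q3 = 0 := by
  simp only [q3, map_mul, eval_lin, P8, Matrix.cons_val_zero, Matrix.cons_val_one, Matrix.head_cons]
  norm_num
lemma ev_3_9 : eval P9 q3 = 0 := by
  simp only [q3, map_mul, eval_lin, P9, Matrix.cons_val_zero, Matrix.cons_val_one, Matrix.head_cons]
  norm_num
lemma ev_4_0 : eval P0 q4 = 0 := by
  simp only [q4, map_mul, eval_lin, P0, Matrix.cons_val_zero, Matrix.cons_val_one, Matrix.head_cons]
  norm_num
lemma ev_4_1 : eval P1 q4 = 0 := by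
  simp only [q4, map_mul, eval_lin, P1, Matrix.cons_val_zero, Matrix.cons_val_one, Matrix.head_cons]
  norm_num
lemma ev_4_2 : eval P2 q4 = 0 := by
  simp only [q4, map_mul, eval_lin, P2, Matrix.cons_val_zero, Matrix.cons_val_one, Matrix.head_cons]
  norm_num
lemma ev_4_3 : eval P3 q4 = 0 := by
  simp only [q4, map_mul, eval_lin, P3, Matrix.cons_val_zero, Matrix.cons_val_one, Matrix.head_cons]
  norm_num
lemma ev_4_4 : eval P4 q4 = 1 := by
  simp only [q4, map_mul, eval_lin, P4, Matrix.cons_val_zero, Matrix.cons_val_one, Matrix.head_cons]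
  norm_num
lemma ev_4_5 : eval P5 q4 = 0 := by
  simp only [q4, map_mul, eval_lin, P5, Matrix.cons_val_zero, Matrix.cons_val_one, Matrix.head_cons]
  norm_num
lemma ev_4_6 : eval P6 q4 = 0 := by
  simp only [q4, map_mul, eval_lin, P6, Matrix.cons_val_zero, Matrix.cons_val_one, Matrix.head_cons]
  norm_num
lemma ev_4_7 : eval P7 q4 = 0 := by
  simp only [q4, map_mul, eval_lin, P7, Matrix.cons_val_zero, Matrix.cons_val_one, Matrix.head_cons]
  norm_num
lemma ev_4_8 : eval P8 q4 = 0 := by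
  simp only [q4, map_mul, eval_lin, P8, Matrix.cons_val_zero, Matrix.cons_val_one, Matrix.head_cons]
  norm_num
lemma ev_4_9 : eval P9 q4 = 0 := by
  simp only [q4, map_mul, eval_lin, P9, Matrix.cons_val_zero, Matrix.cons_val_one, Matrix.head_cons]
  norm_num
lemma ev_5_0 : eval P0 q5 = 0 := by
  simp only [q5, map_mul, eval_lin, P0, Matrix.cons_val_zero, Matrix.cons_val_one, Matrix.head_cons]
  norm_num
lemma ev_5_1 : eval P1 q5 = 0 := by
  simp only [q5, map_mul, eval_lin, P1, Matrix.cons_val_zero, Matrix.cons_val_one, Matrix.head_cons]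
  norm_num
lemma ev_5_2 : eval P2 q5 = 0 := by
  simp only [q5, map_mul, eval_lin, P2, Matrix.cons_val_zero, Matrix.cons_val_one, Matrix.head_cons]
  norm_num
lemma ev_5_3 : eval P3 q5 = 0 := by
  simp only [q5, map_mul, eval_lin, P3, Matrix.cons_val_zero, Matrix.cons_val_one, Matrix.head_cons]
  norm_num
lemma ev_5_4 : eval P4 q5 = 0 := by
  simp only [q5, map_mul, eval_lin, P4, Matrix.cons_val_zero, Matrix.cons_val_one, Matrix.head_cons]
  norm_num
lemma ev_5_5 : eval P5 q5 = 1 := by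
  simp only [q5, map_mul, eval_lin, P5, Matrix.cons_val_zero, Matrix.cons_val_one, Matrix.head_cons]
  norm_num
lemma ev_5_6 : eval P6 q5 = 0 := by
  simp only [q5, map_mul, eval_lin, P6, Matrix.cons_val_zero, Matrix.cons_val_one, Matrix.head_cons]
  norm_num
lemma ev_5_7 : eval P7 q5 = 0 := by
  simp only [q5, map_mul, eval_lin, P7, Matrix.cons_val_zero, Matrix.cons_val_one, Matrix.head_cons]
  norm_num
lemma ev_5_8 : eval P8 q5 = 0 := by
  simp only [q5, map_mul, eval_lin, P8, Matrix.cons_val_zero, Matrix.cons_val_one, Matrix.head_cons]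
  norm_num
lemma ev_5_9 : eval P9 q5 = 0 := by
  simp only [q5, map_mul, eval_lin, P9, Matrix.cons_val_zero, Matrix.cons_val_one, Matrix.head_cons]
  norm_num
lemma ev_6_0 : eval P0 q6 = 0 := by
  simp only [q6, map_mul, eval_lin, P0, Matrix.cons_val_zero, Matrix.cons_val_one, Matrix.head_cons]
  norm_num
lemma ev_6_1 : eval P1 q6 = 0 := by
  simp only [q6, map_mul, eval_lin, P1, Matrix.cons_val_zero, Matrix.cons_val_one, Matrix.head_cons]
  norm_num
lemma ev_6_2 : eval P2 q6 = 0 := by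
  simp only [q6, map_mul, eval_lin, P2, Matrix.cons_val_zero, Matrix.cons_val_one, Matrix.head_cons]
  norm_num
lemma ev_6_3 : eval P3 q6 = 0 := by
  simp only [q6, map_mul, eval_lin, P3, Matrix.cons_val_zero, Matrix.cons_val_one, Matrix.head_cons]
  norm_num
lemma ev_6_4 : eval P4 q6 = 0 := by
  simp only [q6, map_mul, eval_lin, P4, Matrix.cons_val_zero, Matrix.cons_val_one, Matrix.head_cons]
  norm_num
lemma ev_6_5 : eval P5 q6 = 0 := by
  simp only [q6, map_mul, eval_lin, P5, Matrix.cons_val_zero, Matrix.cons_val_one, Matrix.head_cons]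
  norm_num
lemma ev_6_6 : eval P6 q6 = 1 := by
  simp only [q6, map_mul, eval_lin, P6, Matrix.cons_val_zero, Matrix.cons_val_one, Matrix.head_cons]
  norm_num
lemma ev_6_7 : eval P7 q6 = 0 := by
  simp only [q6, map_mul, eval_lin, P7, Matrix.cons_val_zero, Matrix.cons_val_one, Matrix.head_cons]
  norm_num
lemma ev_6_8 : eval P8 q6 = 0 := by
  simp only [q6, map_mul, eval_lin, P8, Matrix.cons_val_zero, Matrix.cons_val_one, Matrix.head_cons]
  norm_num
lemma ev_6_9 : eval P9 q6 = 0 := by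
  simp only [q6, map_mul, eval_lin, P9, Matrix.cons_val_zero, Matrix.cons_val_one, Matrix.head_cons]
  norm_num
lemma ev_7_0 : eval P0 q7 = 0 := by
  simp only [q7, map_mul, eval_lin, P0, Matrix.cons_val_zero, Matrix.cons_val_one, Matrix.head_cons]
  norm_num
lemma ev_7_1 : eval P1 q7 = 0 := by
  simp only [q7, map_mul, eval_lin, P1, Matrix.cons_val_zero, Matrix.cons_val_one, Matrix.head_cons]
  norm_num
lemma ev_7_2 : eval P2 q7 = 0 := by
  simp only [q7, map_mul, eval_lin, P2, Matrix.cons_val_zero, Matrix.cons_val_one, Matrix.head_cons]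
  norm_num
lemma ev_7_3 : eval P3 q7 = 0 := by
  simp only [q7, map_mul, eval_lin, P3, Matrix.cons_val_zero, Matrix.cons_val_one, Matrix.head_cons]
  norm_num
lemma ev_7_4 : eval P4 q7 = 0 := by
  simp only [q7, map_mul, eval_lin, P4, Matrix.cons_val_zero, Matrix.cons_val_one, Matrix.head_cons]
  norm_num
lemma ev_7_5 : eval P5 q7 = 0 := by
  simp only [q7, map_mul, eval_lin, P5, Matrix.cons_val_zero, Matrix.cons_val_one, Matrix.head_cons]
  norm_num
lemma ev_7_6 : eval P6 q7 = 0 := by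
  simp only [q7, map_mul, eval_lin, P6, Matrix.cons_val_zero, Matrix.cons_val_one, Matrix.head_cons]
  norm_num
lemma ev_7_7 : eval P7 q7 = 1 := by
  simp only [q7, map_mul, eval_lin, P7, Matrix.cons_val_zero, Matrix.cons_val_one, Matrix.head_cons]
  norm_num
lemma ev_7_8 : eval P8 q7 = 0 := by
  simp only [q7, map_mul, eval_lin, P8, Matrix.cons_val_zero, Matrix.cons_val_one, Matrix.head_cons]
  norm_num
lemma ev_7_9 : eval P9 q7 = 0 := by
  simp only [q7, map_mul, eval_lin, P9, Matrix.cons_val_zero, Matrix.cons_val_one, Matrix.head_cons]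
  norm_num
lemma ev_8_0 : eval P0 q8 = 0 := by
  simp only [q8, map_mul, eval_lin, P0, Matrix.cons_val_zero, Matrix.cons_val_one, Matrix.head_cons]
  norm_num
lemma ev_8_1 : eval P1 q8 = 0 := by
  simp only [q8, map_mul, eval_lin, P1, Matrix.cons_val_zero, Matrix.cons_val_one, Matrix.head_cons]
  norm_num
lemma ev_8_2 : eval P2 q8 = 0 := by
  simp only [q8, map_mul, eval_lin, P2, Matrix.cons_val_zero, Matrix.cons_val_one, Matrix.head_cons]
  norm_num
lemma ev_8_3 : eval P3 q8 = 0 := by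
  simp only [q8, map_mul, eval_lin, P3, Matrix.cons_val_zero, Matrix.cons_val_one, Matrix.head_cons]
  norm_num
lemma ev_8_4 : eval P4 q8 = 0 := by
  simp only [q8, map_mul, eval_lin, P4, Matrix.cons_val_zero, Matrix.cons_val_one, Matrix.head_cons]
  norm_num
lemma ev_8_5 : eval P5 q8 = 0 := by
  simp only [q8, map_mul, eval_lin, P5, Matrix.cons_val_zero, Matrix.cons_val_one, Matrix.head_cons]
  norm_num
lemma ev_8_6 : eval P6 q8 = 0 := by
  simp only [q8, map_mul, eval_lin, P6, Matrix.cons_val_zero, Matrix.cons_val_one, Matrix.head_cons]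
  norm_num
lemma ev_8_7 : eval P7 q8 = 0 := by
  simp only [q8, map_mul, eval_lin, P7, Matrix.cons_val_zero, Matrix.cons_val_one, Matrix.head_cons]
  norm_num
lemma ev_8_8 : eval P8 q8 = 1 := by
  simp only [q8, map_mul, eval_lin, P8, Matrix.cons_val_zero, Matrix.cons_val_one, Matrix.head_cons]
  norm_num
lemma ev_8_9 : eval P9 q8 = 0 := by
  simp only [q8, map_mul, eval_lin, P9, Matrix.cons_val_zero, Matrix.cons_val_one, Matrix.head_cons]
  norm_num
lemma ev_9_0 : eval P0 q9 = 0 := by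
  simp only [q9, map_mul, eval_lin, P0, Matrix.cons_val_zero, Matrix.cons_val_one, Matrix.head_cons]
  norm_num
lemma ev_9_1 : eval P1 q9 = 0 := by
  simp only [q9, map_mul, eval_lin, P1, Matrix.cons_val_zero, Matrix.cons_val_one, Matrix.head_cons]
  norm_num
lemma ev_9_2 : eval P2 q9 = 0 := by
  simp only [q9, map_mul, eval_lin, P2, Matrix.cons_val_zero, Matrix.cons_val_one, Matrix.head_cons]
  norm_num
lemma ev_9_3 : eval P3 q9 = 0 := by
  simp only [q9, map_mul, eval_lin, P3, Matrix.cons_val_zero, Matrix.cons_val_one, Matrix.head_cons]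
  norm_num
lemma ev_9_4 : eval P4 q9 = 0 := by
  simp only [q9, map_mul, eval_lin, P4, Matrix.cons_val_zero, Matrix.cons_val_one, Matrix.head_cons]
  norm_num
lemma ev_9_5 : eval P5 q9 = 0 := by
  simp only [q9, map_mul, eval_lin, P5, Matrix.cons_val_zero, Matrix.cons_val_one, Matrix.head_cons]
  norm_num
lemma ev_9_6 : eval P6 q9 = 0 := by
  simp only [q9, map_mul, eval_lin, P6, Matrix.cons_val_zero, Matrix.cons_val_one, Matrix.head_cons]
  norm_num
lemma ev_9_7 : eval P7 q9 = 0 := by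
  simp only [q9, map_mul, eval_lin, P7, Matrix.cons_val_zero, Matrix.cons_val_one, Matrix.head_cons]
  norm_num
lemma ev_9_8 : eval P8 q9 = 0 := by
  simp only [q9, map_mul, eval_lin, P8, Matrix.cons_val_zero, Matrix.cons_val_one, Matrix.head_cons]
  norm_num
lemma ev_9_9 : eval P9 q9 = 1 := by
  simp only [q9, map_mul, eval_lin, P9, Matrix.cons_val_zero, Matrix.cons_val_one, Matrix.head_cons]
  norm_num
lemma evz_0 : eval zst q0 ≠ 0 := by
  simp only [q0, map_mul, eval_lin, zst, Matrix.cons_val_zero, Matrix.cons_val_one, Matrix.head_cons]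
  norm_num
lemma evz_1 : eval zst q1 ≠ 0 := by
  simp only [q1, map_mul, eval_lin, zst, Matrix.cons_val_zero, Matrix.cons_val_one, Matrix.head_cons]
  norm_num
lemma evz_2 : eval zst q2 ≠ 0 := by
  simp only [q2, map_mul, eval_lin, zst, Matrix.cons_val_zero, Matrix.cons_val_one, Matrix.head_cons]
  norm_num
lemma evz_3 : eval zst q3 ≠ 0 := by
  simp only [q3, map_mul, eval_lin, zst, Matrix.cons_val_zero, Matrix.cons_val_one, Matrix.head_cons]
  norm_num
lemma evz_4 : eval zst q4 ≠ 0 := by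
  simp only [q4, map_mul, eval_lin, zst, Matrix.cons_val_zero, Matrix.cons_val_one, Matrix.head_cons]
  norm_num
lemma evz_5 : eval zst q5 ≠ 0 := by
  simp only [q5, map_mul, eval_lin, zst, Matrix.cons_val_zero, Matrix.cons_val_one, Matrix.head_cons]
  norm_num
lemma evz_6 : eval zst q6 ≠ 0 := by
  simp only [q6, map_mul, eval_lin, zst, Matrix.cons_val_zero, Matrix.cons_val_one, Matrix.head_cons]
  norm_num
lemma evz_7 : eval zst q7 ≠ 0 := by
  simp only [q7, map_mul, eval_lin, zst, Matrix.cons_val_zero, Matrix.cons_val_one, Matrix.head_cons]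
  norm_num
lemma evz_8 : eval zst q8 ≠ 0 := by
  simp only [q8, map_mul, eval_lin, zst, Matrix.cons_val_zero, Matrix.cons_val_one, Matrix.head_cons]
  norm_num
lemma evz_9 : eval zst q9 ≠ 0 := by
  simp only [q9, map_mul, eval_lin, zst, Matrix.cons_val_zero, Matrix.cons_val_one, Matrix.head_cons]
  norm_num
noncomputable def g : BPoly := lin (7 : ℝ) (10 : ℝ) ((-8) : ℝ)
lemma g_deg : g.totalDegree = 1 := lin_deg1_of_left _ _ _ (by norm_num)
lemma evg_0 : eval P0 g ≠ 0 := by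
  simp only [g, eval_lin, P0, Matrix.cons_val_zero, Matrix.cons_val_one, Matrix.head_cons]
  norm_num
lemma evg_1 : eval P1 g ≠ 0 := by
  simp only [g, eval_lin, P1, Matrix.cons_val_zero, Matrix.cons_val_one, Matrix.head_cons]
  norm_num
lemma evg_2 : eval P2 g = 0 := by
  simp only [g, eval_lin, P2, Matrix.cons_val_zero, Matrix.cons_val_one, Matrix.head_cons]
  norm_num
lemma evg_3 : eval P3 g ≠ 0 := by
  simp only [g, eval_lin, P3, Matrix.cons_val_zero, Matrix.cons_val_one, Matrix.head_cons]
  norm_num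
lemma evg_4 : eval P4 g = 0 := by
  simp only [g, eval_lin, P4, Matrix.cons_val_zero, Matrix.cons_val_one, Matrix.head_cons]
  norm_num
lemma evg_5 : eval P5 g ≠ 0 := by
  simp only [g, eval_lin, P5, Matrix.cons_val_zero, Matrix.cons_val_one, Matrix.head_cons]
  norm_num
lemma evg_6 : eval P6 g ≠ 0 := by
  simp only [g, eval_lin, P6, Matrix.cons_val_zero, Matrix.cons_val_one, Matrix.head_cons]
  norm_num
lemma evg_7 : eval P7 g ≠ 0 := by
  simp only [g, eval_lin, P7, Matrix.cons_val_zero, Matrix.cons_val_one, Matrix.head_cons]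
  norm_num
lemma evg_8 : eval P8 g = 0 := by
  simp only [g, eval_lin, P8, Matrix.cons_val_zero, Matrix.cons_val_one, Matrix.head_cons]
  norm_num
lemma evg_9 : eval P9 g ≠ 0 := by
  simp only [g, eval_lin, P9, Matrix.cons_val_zero, Matrix.cons_val_one, Matrix.head_cons]
  norm_num
lemma evg_z : eval zst g = 0 := by
  simp only [g, eval_lin, zst, Matrix.cons_val_zero, Matrix.cons_val_one, Matrix.head_cons]
  norm_num

lemma inj (p : BPoly) (hd : p.totalDegree ≤ 3) (h0 : eval P0 p = 0) (h1 : eval P1 p = 0) (h2 : eval P2 p = 0) (h3 : eval P3 p = 0) (h4 : eval P4 p = 0) (h5 : eval P5 p = 0) (h6 : eval P6 p = 0) (h7 : eval P7 p = 0) (h8 : eval P8 p = 0) (h9 : eval P9 p = 0) : p = 0 := by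
  have hQ := expand p hd
  rw [hQ] at h0 h1 h2 h3 h4 h5 h6 h7 h8 h9
  simp only [Q, map_add, eval_mon, P0, P1, P2, P3, P4, P5, P6, P7, P8, P9,
    Matrix.cons_val_zero, Matrix.cons_val_one, Matrix.head_cons] at h0 h1 h2 h3 h4 h5 h6 h7 h8 h9
  have g00 : coeff (mon 0 0) p = 0 := by linear_combination (8000/81 : ℝ) * h0 + ((-2744)/27 : ℝ) * h1 + ((-9826)/27 : ℝ) * h2 + (29791/81 : ℝ) * h3
  have g01 : coeff (mon 0 1) p = 0 := by linear_combination ((-8000)/27 : ℝ) * h0 + (9604/27 : ℝ) * h1 + (63869/54 : ℝ) * h2 + ((-29791)/24 : ℝ) * h3 + ((-4)/27 : ℝ) * h4 + ((-125)/54 : ℝ) * h5 + (343/216 : ℝ) * h6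
  have g02 : coeff (mon 0 2) p = 0 := by linear_combination (8000/27 : ℝ) * h0 + ((-10976)/27 : ℝ) * h1 + ((-4913)/4 : ℝ) * h2 + (387283/288 : ℝ) * h3 + (8/27 : ℝ) * h4 + (625/108 : ℝ) * h5 + ((-343)/96 : ℝ) * h6 + ((-1331)/54 : ℝ) * h7 + (6859/432 : ℝ) * h8
  have g03 : coeff (mon 0 3) p = 0 := by linear_combination ((-8000)/81 : ℝ) * h0 + (1372/9 : ℝ) * h1 + (4913/12 : ℝ) * h2 + ((-29791)/64 : ℝ) * h3 + ((-4)/27 : ℝ) * h4 + ((-125)/36 : ℝ) * h5 + (343/192 : ℝ) * h6 + (1331/54 : ℝ) * h7 + ((-6859)/288 : ℝ) * h8 + (2197/648 : ℝ) * h9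
  have g10 : coeff (mon 1 0) p = 0 := by linear_combination ((-2500)/9 : ℝ) * h0 + (16807/54 : ℝ) * h1 + (230911/216 : ℝ) * h2 + ((-29791)/27 : ℝ) * h3 + (4/27 : ℝ) * h4 + (125/54 : ℝ) * h5 + ((-343)/216 : ℝ) * h6
  have g11 : coeff (mon 1 1) p = 0 := by linear_combination (5000/9 : ℝ) * h0 + ((-78547)/108 : ℝ) * h1 + ((-1999591)/864 : ℝ) * h2 + (29791/12 : ℝ) * h3 + (1/108 : ℝ) * h4 + ((-125)/96 : ℝ) * h5 + (343/864 : ℝ) * h6 + (1331/108 : ℝ) * h7 + ((-6859)/864 : ℝ) * h8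
  have g12 : coeff (mon 1 2) p = 0 := by linear_combination ((-2500)/9 : ℝ) * h0 + (44933/108 : ℝ) * h1 + (230911/192 : ℝ) * h2 + ((-387283)/288 : ℝ) * h3 + ((-17)/108 : ℝ) * h4 + ((-3625)/1728 : ℝ) * h5 + (343/192 : ℝ) * h6 + (9317/864 : ℝ) * h7 + ((-6859)/1728 : ℝ) * h8 + ((-2197)/864 : ℝ) * h9
  have g20 : coeff (mon 2 0) p = 0 := by linear_combination (4625/18 : ℝ) * h0 + ((-45619)/144 : ℝ) * h1 + ((-112999)/108 : ℝ) * h2 + (29791/27 : ℝ) * h3 + ((-11)/36 : ℝ) * h4 + ((-3875)/864 : ℝ) * h5 + (343/108 : ℝ) * h6 + (1331/108 : ℝ) * h7 + ((-6859)/864 : ℝ) * h8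
  have g21 : coeff (mon 2 1) p = 0 := by linear_combination ((-4625)/18 : ℝ) * h0 + (106673/288 : ℝ) * h1 + (977687/864 : ℝ) * h2 + ((-29791)/24 : ℝ) * h3 + (43/288 : ℝ) * h4 + (5875/1728 : ℝ) * h5 + ((-1715)/864 : ℝ) * h6 + ((-41261)/1728 : ℝ) * h7 + (34295/1728 : ℝ) * h8 + ((-2197)/1728 : ℝ) * h9
  have g30 : coeff (mon 3 0) p = 0 := by linear_combination ((-625)/8 : ℝ) * h0 + (1715/16 : ℝ) * h1 + (24565/72 : ℝ) * h2 + ((-29791)/81 : ℝ) * h3 + (5/32 : ℝ) * h4 + (625/288 : ℝ) * h5 + ((-343)/216 : ℝ) * h6 + ((-6655)/576 : ℝ) * h7 + (6859/864 : ℝ) * h8 + (2197/5184 : ℝ) * h9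
  rw [hQ]
  simp only [Q, g00, g01, g02, g03, g10, g11, g12, g20, g21, g30, monomial_zero]
  simp

lemma eq_of_interp (p q : BPoly) (hp : p.totalDegree ≤ 3) (hq : q.totalDegree ≤ 3)
    (e0 : eval P0 p = eval P0 q) (e1 : eval P1 p = eval P1 q) (e2 : eval P2 p = eval P2 q) (e3 : eval P3 p = eval P3 q) (e4 : eval P4 p = eval P4 q) (e5 : eval P5 p = eval P5 q) (e6 : eval P6 p = eval P6 q) (e7 : eval P7 p = eval P7 q) (e8 : eval P8 p = eval P8 q) (e9 : eval P9 p = eval P9 q) : p = q := by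
  have hsub : p - q = 0 := by
    apply inj (p - q)
    · calc (p - q).totalDegree = (p + (-q)).totalDegree := by rw [sub_eq_add_neg]
        _ ≤ max p.totalDegree (-q).totalDegree := totalDegree_add _ _
        _ ≤ 3 := by rw [totalDegree_neg]; exact max_le hp hq
    · rw [map_sub, e0, sub_self]
    · rw [map_sub, e1, sub_self]
    · rw [map_sub, e2, sub_self]
    · rw [map_sub, e3, sub_self]
    · rw [map_sub, e4, sub_self]
    · rw [map_sub, e5, sub_self]
    · rw [map_sub, e6, sub_self]
    · rw [map_sub, e7, sub_self]
    · rw [map_sub, e8, sub_self]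
    · rw [map_sub, e9, sub_self]
  exact sub_eq_zero.mp hsub
noncomputable def XX : Set Pt := {P0, P1, P2, P3, P4, P5, P6, P7, P8, P9}
noncomputable def ll : Set Pt := {x : Pt | eval x g = 0}
lemma memX0 : P0 ∈ XX := by simp [XX]
lemma memX1 : P1 ∈ XX := by simp [XX]
lemma memX2 : P2 ∈ XX := by simp [XX]
lemma memX3 : P3 ∈ XX := by simp [XX]
lemma memX4 : P4 ∈ XX := by simp [XX]
lemma memX5 : P5 ∈ XX := by simp [XX]
lemma memX6 : P6 ∈ XX := by simp [XX]
lemma memX7 : P7 ∈ XX := by simp [XX]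
lemma memX8 : P8 ∈ XX := by simp [XX]
lemma memX9 : P9 ∈ XX := by simp [XX]
lemma memXX (A : Pt) (hA : A ∈ XX) :
    A = P0 ∨ A = P1 ∨ A = P2 ∨ A = P3 ∨ A = P4 ∨ A = P5 ∨ A = P6 ∨ A = P7 ∨ A = P8 ∨ A = P9 := by
  simpa [XX, Set.mem_insert_iff, Set.mem_singleton_iff] using hA
lemma finXX : XX.Finite := by
  unfold XX
  exact (((((((((Set.finite_singleton P9).insert P8).insert P7).insert P6).insert P5).insert P4).insert P3).insert P2).insert P1).insert P0
lemma ncardXX : XX.ncard = 10 := by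
  unfold XX
  rw [Set.ncard_insert_of_notMem (by
    simp only [Set.mem_insert_iff, Set.mem_singleton_iff]
    rintro (h|h|h|h|h|h|h|h|h)
    exacts [ne_0_1 h, ne_0_2 h, ne_0_3 h, ne_0_4 h, ne_0_5 h, ne_0_6 h, ne_0_7 h, ne_0_8 h, ne_0_9 h]) (((((((((Set.finite_singleton P9).insert P8).insert P7).insert P6).insert P5).insert P4).insert P3).insert P2).insert P1)]
  rw [Set.ncard_insert_of_notMem (by
    simp only [Set.mem_insert_iff, Set.mem_singleton_iff]
    rintro (h|h|h|h|h|h|h|h)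
    exacts [ne_1_2 h, ne_1_3 h, ne_1_4 h, ne_1_5 h, ne_1_6 h, ne_1_7 h, ne_1_8 h, ne_1_9 h]) ((((((((Set.finite_singleton P9).insert P8).insert P7).insert P6).insert P5).insert P4).insert P3).insert P2)]
  rw [Set.ncard_insert_of_notMem (by
    simp only [Set.mem_insert_iff, Set.mem_singleton_iff]
    rintro (h|h|h|h|h|h|h)
    exacts [ne_2_3 h, ne_2_4 h, ne_2_5 h, ne_2_6 h, ne_2_7 h, ne_2_8 h, ne_2_9 h]) (((((((Set.finite_singleton P9).insert P8).insert P7).insert P6).insert P5).insert P4).insert P3)]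
  rw [Set.ncard_insert_of_notMem (by
    simp only [Set.mem_insert_iff, Set.mem_singleton_iff]
    rintro (h|h|h|h|h|h)
    exacts [ne_3_4 h, ne_3_5 h, ne_3_6 h, ne_3_7 h, ne_3_8 h, ne_3_9 h]) ((((((Set.finite_singleton P9).insert P8).insert P7).insert P6).insert P5).insert P4)]
  rw [Set.ncard_insert_of_notMem (by
    simp only [Set.mem_insert_iff, Set.mem_singleton_iff]
    rintro (h|h|h|h|h)
    exacts [ne_4_5 h, ne_4_6 h, ne_4_7 h, ne_4_8 h, ne_4_9 h]) (((((Set.finite_singleton P9).insert P8).insert P7).insert P6).insert P5)]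
  rw [Set.ncard_insert_of_notMem (by
    simp only [Set.mem_insert_iff, Set.mem_singleton_iff]
    rintro (h|h|h|h)
    exacts [ne_5_6 h, ne_5_7 h, ne_5_8 h, ne_5_9 h]) ((((Set.finite_singleton P9).insert P8).insert P7).insert P6)]
  rw [Set.ncard_insert_of_notMem (by
    simp only [Set.mem_insert_iff, Set.mem_singleton_iff]
    rintro (h|h|h)
    exacts [ne_6_7 h, ne_6_8 h, ne_6_9 h]) (((Set.finite_singleton P9).insert P8).insert P7)]
  rw [Set.ncard_insert_of_notMem (by
    simp only [Set.mem_insert_iff, Set.mem_singleton_iff]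
    rintro (h|h)
    exacts [ne_7_8 h, ne_7_9 h]) ((Set.finite_singleton P9).insert P8)]
  rw [Set.ncard_insert_of_notMem (by
    simp only [Set.mem_insert_iff, Set.mem_singleton_iff]
    rintro (h)
    exacts [ne_8_9 h]) (Set.finite_singleton P9)]
  rw [Set.ncard_singleton]
noncomputable def interp (c : Pt → ℝ) : BPoly :=
  C (c P0) * q0 + C (c P1) * q1 + C (c P2) * q2 + C (c P3) * q3 + C (c P4) * q4 + C (c P5) * q5 + C (c P6) * q6 + C (c P7) * q7 + C (c P8) * q8 + C (c P9) * q9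
lemma interp_deg (c : Pt → ℝ) : (interp c).totalDegree ≤ 3 := by
  unfold interp
  have d0 : (C (c P0) * q0).totalDegree ≤ 3 := le_trans (totalDegree_mul _ _) (by simp only [totalDegree_C, zero_add]; exact qdeg0)
  have d1 : (C (c P1) * q1).totalDegree ≤ 3 := le_trans (totalDegree_mul _ _) (by simp only [totalDegree_C, zero_add]; exact qdeg1)
  have d2 : (C (c P2) * q2).totalDegree ≤ 3 := le_trans (totalDegree_mul _ _) (by simp only [totalDegree_C, zero_add]; exact qdeg2)
  have d3 : (C (c P3) * q3).totalDegree ≤ 3 := le_trans (totalDegree_mul _ _) (by simp only [totalDegree_C, zero_add]; exact qdeg3)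
  have d4 : (C (c P4) * q4).totalDegree ≤ 3 := le_trans (totalDegree_mul _ _) (by simp only [totalDegree_C, zero_add]; exact qdeg4)
  have d5 : (C (c P5) * q5).totalDegree ≤ 3 := le_trans (totalDegree_mul _ _) (by simp only [totalDegree_C, zero_add]; exact qdeg5)
  have d6 : (C (c P6) * q6).totalDegree ≤ 3 := le_trans (totalDegree_mul _ _) (by simp only [totalDegree_C, zero_add]; exact qdeg6)
  have d7 : (C (c P7) * q7).totalDegree ≤ 3 := le_trans (totalDegree_mul _ _) (by simp only [totalDegree_C, zero_add]; exact qdeg7)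
  have d8 : (C (c P8) * q8).totalDegree ≤ 3 := le_trans (totalDegree_mul _ _) (by simp only [totalDegree_C, zero_add]; exact qdeg8)
  have d9 : (C (c P9) * q9).totalDegree ≤ 3 := le_trans (totalDegree_mul _ _) (by simp only [totalDegree_C, zero_add]; exact qdeg9)
  exact le_trans (totalDegree_add _ _) (max_le (le_trans (totalDegree_add _ _) (max_le (le_trans (totalDegree_add _ _) (max_le (le_trans (totalDegree_add _ _) (max_le (le_trans (totalDegree_add _ _) (max_le (le_trans (totalDegree_add _ _) (max_le (le_trans (totalDegree_add _ _) (max_le (le_trans (totalDegree_add _ _) (max_le (le_trans (totalDegree_add _ _) (max_le (d0) d1)) d2)) d3)) d4)) d5)) d6)) d7)) d8)) d9)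
lemma interp_ev_0 (c : Pt → ℝ) : eval P0 (interp c) = c P0 := by
  simp only [interp, map_add, map_mul, eval_C, ev_0_0, ev_1_0, ev_2_0, ev_3_0, ev_4_0, ev_5_0, ev_6_0, ev_7_0, ev_8_0, ev_9_0]
  ring
lemma interp_ev_1 (c : Pt → ℝ) : eval P1 (interp c) = c P1 := by
  simp only [interp, map_add, map_mul, eval_C, ev_0_1, ev_1_1, ev_2_1, ev_3_1, ev_4_1, ev_5_1, ev_6_1, ev_7_1, ev_8_1, ev_9_1]
  ring
lemma interp_ev_2 (c : Pt → ℝ) : eval P2 (interp c) = c P2 := by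
  simp only [interp, map_add, map_mul, eval_C, ev_0_2, ev_1_2, ev_2_2, ev_3_2, ev_4_2, ev_5_2, ev_6_2, ev_7_2, ev_8_2, ev_9_2]
  ring
lemma interp_ev_3 (c : Pt → ℝ) : eval P3 (interp c) = c P3 := by
  simp only [interp, map_add, map_mul, eval_C, ev_0_3, ev_1_3, ev_2_3, ev_3_3, ev_4_3, ev_5_3, ev_6_3, ev_7_3, ev_8_3, ev_9_3]
  ring
lemma interp_ev_4 (c : Pt → ℝ) : eval P4 (interp c) = c P4 := by
  simp only [interp, map_add, map_mul, eval_C, ev_0_4, ev_1_4, ev_2_4, ev_3_4, ev_4_4, ev_5_4, ev_6_4, ev_7_4, ev_8_4, ev_9_4]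
  ring
lemma interp_ev_5 (c : Pt → ℝ) : eval P5 (interp c) = c P5 := by
  simp only [interp, map_add, map_mul, eval_C, ev_0_5, ev_1_5, ev_2_5, ev_3_5, ev_4_5, ev_5_5, ev_6_5, ev_7_5, ev_8_5, ev_9_5]
  ring
lemma interp_ev_6 (c : Pt → ℝ) : eval P6 (interp c) = c P6 := by
  simp only [interp, map_add, map_mul, eval_C, ev_0_6, ev_1_6, ev_2_6, ev_3_6, ev_4_6, ev_5_6, ev_6_6, ev_7_6, ev_8_6, ev_9_6]
  ring
lemma interp_ev_7 (c : Pt → ℝ) : eval P7 (interp c) = c P7 := by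
  simp only [interp, map_add, map_mul, eval_C, ev_0_7, ev_1_7, ev_2_7, ev_3_7, ev_4_7, ev_5_7, ev_6_7, ev_7_7, ev_8_7, ev_9_7]
  ring
lemma interp_ev_8 (c : Pt → ℝ) : eval P8 (interp c) = c P8 := by
  simp only [interp, map_add, map_mul, eval_C, ev_0_8, ev_1_8, ev_2_8, ev_3_8, ev_4_8, ev_5_8, ev_6_8, ev_7_8, ev_8_8, ev_9_8]
  ring
lemma interp_ev_9 (c : Pt → ℝ) : eval P9 (interp c) = c P9 := by
  simp only [interp, map_add, map_mul, eval_C, ev_0_9, ev_1_9, ev_2_9, ev_3_9, ev_4_9, ev_5_9, ev_6_9, ev_7_9, ev_8_9, ev_9_9]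
  ring

lemma poisedXX : IsPoised 3 XX := by
  constructor
  · rw [ncardXX]
  · intro c
    refine ⟨interp c, ⟨interp_deg c, ?_⟩, ?_⟩
    · intro A hA
      rcases memXX A hA with rfl|rfl|rfl|rfl|rfl|rfl|rfl|rfl|rfl|rfl
      · exact interp_ev_0 c
      · exact interp_ev_1 c
      · exact interp_ev_2 c
      · exact interp_ev_3 c
      · exact interp_ev_4 c
      · exact interp_ev_5 c
      · exact interp_ev_6 c
      · exact interp_ev_7 c
      · exact interp_ev_8 c
      · exact interp_ev_9 c
    · rintro p ⟨hdp, hp⟩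
      apply eq_of_interp p (interp c) hdp (interp_deg c)
      · rw [hp P0 memX0, interp_ev_0]
      · rw [hp P1 memX1, interp_ev_1]
      · rw [hp P2 memX2, interp_ev_2]
      · rw [hp P3 memX3, interp_ev_3]
      · rw [hp P4 memX4, interp_ev_4]
      · rw [hp P5 memX5, interp_ev_5]
      · rw [hp P6 memX6, interp_ev_6]
      · rw [hp P7 memX7, interp_ev_7]
      · rw [hp P8 memX8, interp_ev_8]
      · rw [hp P9 memX9, interp_ev_9]

lemma isGCXX : IsGC 3 XX := by
  refine ⟨poisedXX, ?_⟩
  intro A hA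
  rcases memXX A hA with rfl|rfl|rfl|rfl|rfl|rfl|rfl|rfl|rfl|rfl
  · refine ⟨q0, ⟨qdeg0, ev_0_0, ?_⟩, ⟨![lin (625/216 : ℝ) (250/81 : ℝ) ((-250)/81 : ℝ), lin (9 : ℝ) (8 : ℝ) ((-8) : ℝ), lin ((-3) : ℝ) ((-4) : ℝ) (4 : ℝ)], ?_, ?_⟩⟩
    · intro B hB hne
      rcases memXX B hB with rfl|rfl|rfl|rfl|rfl|rfl|rfl|rfl|rfl|rfl
      · exact absurd rfl hne
      · exact ev_0_1
      · exact ev_0_2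
      · exact ev_0_3
      · exact ev_0_4
      · exact ev_0_5
      · exact ev_0_6
      · exact ev_0_7
      · exact ev_0_8
      · exact ev_0_9
    · intro i
      fin_cases i
      · exact lin_deg1_of_left (625/216 : ℝ) (250/81 : ℝ) ((-250)/81 : ℝ) (by norm_num)
      · exact lin_deg1_of_left (9 : ℝ) (8 : ℝ) ((-8) : ℝ) (by norm_num)
      · exact lin_deg1_of_left ((-3) : ℝ) ((-4) : ℝ) (4 : ℝ) (by norm_num)
    · rw [Fin.prod_univ_three]
      simp only [Matrix.cons_val_zero, Matrix.cons_val_one, Matrix.head_cons, Matrix.cons_val_two, Matrix.tail_cons]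
      rfl
  · refine ⟨q1, ⟨qdeg1, ev_1_1, ?_⟩, ⟨![lin ((-343)/432 : ℝ) ((-343)/288 : ℝ) (343/432 : ℝ), lin ((-15) : ℝ) ((-16) : ℝ) (16 : ℝ), lin (9 : ℝ) (8 : ℝ) ((-8) : ℝ)], ?_, ?_⟩⟩
    · intro B hB hne
      rcases memXX B hB with rfl|rfl|rfl|rfl|rfl|rfl|rfl|rfl|rfl|rfl
      · exact ev_1_0
      · exact absurd rfl hne
      · exact ev_1_2
      · exact ev_1_3
      · exact ev_1_4
      · exact ev_1_5
      · exact ev_1_6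
      · exact ev_1_7
      · exact ev_1_8
      · exact ev_1_9
    · intro i
      fin_cases i
      · exact lin_deg1_of_left ((-343)/432 : ℝ) ((-343)/288 : ℝ) (343/432 : ℝ) (by norm_num)
      · exact lin_deg1_of_left ((-15) : ℝ) ((-16) : ℝ) (16 : ℝ) (by norm_num)
      · exact lin_deg1_of_left (9 : ℝ) (8 : ℝ) ((-8) : ℝ) (by norm_num)
    · rw [Fin.prod_univ_three]
      simp only [Matrix.cons_val_zero, Matrix.cons_val_one, Matrix.head_cons, Matrix.cons_val_two, Matrix.tail_cons]
      rfl
  · refine ⟨q2, ⟨qdeg2, ev_2_2, ?_⟩, ⟨![lin ((-4913)/864 : ℝ) ((-4913)/576 : ℝ) (4913/864 : ℝ), lin (4 : ℝ) (3 : ℝ) ((-4) : ℝ), lin ((-15) : ℝ) ((-16) : ℝ) (16 : ℝ)], ?_, ?_⟩⟩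
    · intro B hB hne
      rcases memXX B hB with rfl|rfl|rfl|rfl|rfl|rfl|rfl|rfl|rfl|rfl
      · exact ev_2_0
      · exact ev_2_1
      · exact absurd rfl hne
      · exact ev_2_3
      · exact ev_2_4
      · exact ev_2_5
      · exact ev_2_6
      · exact ev_2_7
      · exact ev_2_8
      · exact ev_2_9
    · intro i
      fin_cases i
      · exact lin_deg1_of_left ((-4913)/864 : ℝ) ((-4913)/576 : ℝ) (4913/864 : ℝ) (by norm_num)
      · exact lin_deg1_of_left (4 : ℝ) (3 : ℝ) ((-4) : ℝ) (by norm_num)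
      · exact lin_deg1_of_left ((-15) : ℝ) ((-16) : ℝ) (16 : ℝ) (by norm_num)
    · rw [Fin.prod_univ_three]
      simp only [Matrix.cons_val_zero, Matrix.cons_val_one, Matrix.head_cons, Matrix.cons_val_two, Matrix.tail_cons]
      rfl
  · refine ⟨q3, ⟨qdeg3, ev_3_3, ?_⟩, ⟨![lin ((-29791)/2592 : ℝ) ((-29791)/1728 : ℝ) (29791/2592 : ℝ), lin (4 : ℝ) (3 : ℝ) ((-4) : ℝ), lin (8 : ℝ) (9 : ℝ) ((-8) : ℝ)], ?_, ?_⟩⟩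
    · intro B hB hne
      rcases memXX B hB with rfl|rfl|rfl|rfl|rfl|rfl|rfl|rfl|rfl|rfl
      · exact ev_3_0
      · exact ev_3_1
      · exact ev_3_2
      · exact absurd rfl hne
      · exact ev_3_4
      · exact ev_3_5
      · exact ev_3_6
      · exact ev_3_7
      · exact ev_3_8
      · exact ev_3_9
    · intro i
      fin_cases i
      · exact lin_deg1_of_left ((-29791)/2592 : ℝ) ((-29791)/1728 : ℝ) (29791/2592 : ℝ) (by norm_num)
      · exact lin_deg1_of_left (4 : ℝ) (3 : ℝ) ((-4) : ℝ) (by norm_num)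
      · exact lin_deg1_of_left (8 : ℝ) (9 : ℝ) ((-8) : ℝ) (by norm_num)
    · rw [Fin.prod_univ_three]
      simp only [Matrix.cons_val_zero, Matrix.cons_val_one, Matrix.head_cons, Matrix.cons_val_two, Matrix.tail_cons]
      rfl
  · refine ⟨q4, ⟨qdeg4, ev_4_4, ?_⟩, ⟨![lin ((-1)/864 : ℝ) (1/864 : ℝ) (0 : ℝ), lin ((-15) : ℝ) ((-16) : ℝ) (16 : ℝ), lin (9 : ℝ) (8 : ℝ) ((-8) : ℝ)], ?_, ?_⟩⟩
    · intro B hB hne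
      rcases memXX B hB with rfl|rfl|rfl|rfl|rfl|rfl|rfl|rfl|rfl|rfl
      · exact ev_4_0
      · exact ev_4_1
      · exact ev_4_2
      · exact ev_4_3
      · exact absurd rfl hne
      · exact ev_4_5
      · exact ev_4_6
      · exact ev_4_7
      · exact ev_4_8
      · exact ev_4_9
    · intro i
      fin_cases i
      · exact lin_deg1_of_left ((-1)/864 : ℝ) (1/864 : ℝ) (0 : ℝ) (by norm_num)
      · exact lin_deg1_of_left ((-15) : ℝ) ((-16) : ℝ) (16 : ℝ) (by norm_num)
      · exact lin_deg1_of_left (9 : ℝ) (8 : ℝ) ((-8) : ℝ) (by norm_num)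
    · rw [Fin.prod_univ_three]
      simp only [Matrix.cons_val_zero, Matrix.cons_val_one, Matrix.head_cons, Matrix.cons_val_two, Matrix.tail_cons]
      rfl
  · refine ⟨q5, ⟨qdeg5, ev_5_5, ?_⟩, ⟨![lin ((-125)/1728 : ℝ) (125/1728 : ℝ) (0 : ℝ), lin (2 : ℝ) (3 : ℝ) ((-2) : ℝ), lin ((-15) : ℝ) ((-16) : ℝ) (16 : ℝ)], ?_, ?_⟩⟩
    · intro B hB hne
      rcases memXX B hB with rfl|rfl|rfl|rfl|rfl|rfl|rfl|rfl|rfl|rfl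
      · exact ev_5_0
      · exact ev_5_1
      · exact ev_5_2
      · exact ev_5_3
      · exact ev_5_4
      · exact absurd rfl hne
      · exact ev_5_6
      · exact ev_5_7
      · exact ev_5_8
      · exact ev_5_9
    · intro i
      fin_cases i
      · exact lin_deg1_of_left ((-125)/1728 : ℝ) (125/1728 : ℝ) (0 : ℝ) (by norm_num)
      · exact lin_deg1_of_left (2 : ℝ) (3 : ℝ) ((-2) : ℝ) (by norm_num)
      · exact lin_deg1_of_left ((-15) : ℝ) ((-16) : ℝ) (16 : ℝ) (by norm_num)
    · rw [Fin.prod_univ_three]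
      simp only [Matrix.cons_val_zero, Matrix.cons_val_one, Matrix.head_cons, Matrix.cons_val_two, Matrix.tail_cons]
      rfl
  · refine ⟨q6, ⟨qdeg6, ev_6_6, ?_⟩, ⟨![lin ((-343)/1728 : ℝ) (343/1728 : ℝ) (0 : ℝ), lin (2 : ℝ) (3 : ℝ) ((-2) : ℝ), lin (4 : ℝ) (3 : ℝ) ((-4) : ℝ)], ?_, ?_⟩⟩
    · intro B hB hne
      rcases memXX B hB with rfl|rfl|rfl|rfl|rfl|rfl|rfl|rfl|rfl|rfl
      · exact ev_6_0
      · exact ev_6_1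
      · exact ev_6_2
      · exact ev_6_3
      · exact ev_6_4
      · exact ev_6_5
      · exact absurd rfl hne
      · exact ev_6_7
      · exact ev_6_8
      · exact ev_6_9
    · intro i
      fin_cases i
      · exact lin_deg1_of_left ((-343)/1728 : ℝ) (343/1728 : ℝ) (0 : ℝ) (by norm_num)
      · exact lin_deg1_of_left (2 : ℝ) (3 : ℝ) ((-2) : ℝ) (by norm_num)
      · exact lin_deg1_of_left (4 : ℝ) (3 : ℝ) ((-4) : ℝ) (by norm_num)
    · rw [Fin.prod_univ_three]
      simp only [Matrix.cons_val_zero, Matrix.cons_val_one, Matrix.head_cons, Matrix.cons_val_two, Matrix.tail_cons]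
      rfl
  · refine ⟨q7, ⟨qdeg7, ev_7_7, ?_⟩, ⟨![lin (1331/1728 : ℝ) ((-1331)/1728 : ℝ) (0 : ℝ), lin (1 : ℝ) (2 : ℝ) (0 : ℝ), lin ((-15) : ℝ) ((-16) : ℝ) (16 : ℝ)], ?_, ?_⟩⟩
    · intro B hB hne
      rcases memXX B hB with rfl|rfl|rfl|rfl|rfl|rfl|rfl|rfl|rfl|rfl
      · exact ev_7_0
      · exact ev_7_1
      · exact ev_7_2
      · exact ev_7_3
      · exact ev_7_4
      · exact ev_7_5
      · exact ev_7_6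
      · exact absurd rfl hne
      · exact ev_7_8
      · exact ev_7_9
    · intro i
      fin_cases i
      · exact lin_deg1_of_left (1331/1728 : ℝ) ((-1331)/1728 : ℝ) (0 : ℝ) (by norm_num)
      · exact lin_deg1_of_left (1 : ℝ) (2 : ℝ) (0 : ℝ) (by norm_num)
      · exact lin_deg1_of_left ((-15) : ℝ) ((-16) : ℝ) (16 : ℝ) (by norm_num)
    · rw [Fin.prod_univ_three]
      simp only [Matrix.cons_val_zero, Matrix.cons_val_one, Matrix.head_cons, Matrix.cons_val_two, Matrix.tail_cons]
      rfl
  · refine ⟨q8, ⟨qdeg8, ev_8_8, ?_⟩, ⟨![lin (6859/1728 : ℝ) ((-6859)/1728 : ℝ) (0 : ℝ), lin (1 : ℝ) (2 : ℝ) (0 : ℝ), lin (2 : ℝ) (3 : ℝ) ((-2) : ℝ)], ?_, ?_⟩⟩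
    · intro B hB hne
      rcases memXX B hB with rfl|rfl|rfl|rfl|rfl|rfl|rfl|rfl|rfl|rfl
      · exact ev_8_0
      · exact ev_8_1
      · exact ev_8_2
      · exact ev_8_3
      · exact ev_8_4
      · exact ev_8_5
      · exact ev_8_6
      · exact ev_8_7
      · exact absurd rfl hne
      · exact ev_8_9
    · intro i
      fin_cases i
      · exact lin_deg1_of_left (6859/1728 : ℝ) ((-6859)/1728 : ℝ) (0 : ℝ) (by norm_num)
      · exact lin_deg1_of_left (1 : ℝ) (2 : ℝ) (0 : ℝ) (by norm_num)
      · exact lin_deg1_of_left (2 : ℝ) (3 : ℝ) ((-2) : ℝ) (by norm_num)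
    · rw [Fin.prod_univ_three]
      simp only [Matrix.cons_val_zero, Matrix.cons_val_one, Matrix.head_cons, Matrix.cons_val_two, Matrix.tail_cons]
      rfl
  · refine ⟨q9, ⟨qdeg9, ev_9_9, ?_⟩, ⟨![lin ((-2197)/5184 : ℝ) (2197/5184 : ℝ) (0 : ℝ), lin (1 : ℝ) (2 : ℝ) (0 : ℝ), lin ((-1) : ℝ) (4 : ℝ) (0 : ℝ)], ?_, ?_⟩⟩
    · intro B hB hne
      rcases memXX B hB with rfl|rfl|rfl|rfl|rfl|rfl|rfl|rfl|rfl|rfl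
      · exact ev_9_0
      · exact ev_9_1
      · exact ev_9_2
      · exact ev_9_3
      · exact ev_9_4
      · exact ev_9_5
      · exact ev_9_6
      · exact ev_9_7
      · exact ev_9_8
      · exact absurd rfl hne
    · intro i
      fin_cases i
      · exact lin_deg1_of_left ((-2197)/5184 : ℝ) (2197/5184 : ℝ) (0 : ℝ) (by norm_num)
      · exact lin_deg1_of_left (1 : ℝ) (2 : ℝ) (0 : ℝ) (by norm_num)
      · exact lin_deg1_of_left ((-1) : ℝ) (4 : ℝ) (0 : ℝ) (by norm_num)
    · rw [Fin.prod_univ_three]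
      simp only [Matrix.cons_val_zero, Matrix.cons_val_one, Matrix.head_cons, Matrix.cons_val_two, Matrix.tail_cons]
      rfl

lemma capXl : XX ∩ ll = {P2, P4, P8} := by
  ext x
  constructor
  · rintro ⟨hX, hl⟩
    have hl' : eval x g = 0 := hl
    rcases memXX x hX with rfl|rfl|rfl|rfl|rfl|rfl|rfl|rfl|rfl|rfl
    · exact absurd hl' evg_0
    · exact absurd hl' evg_1
    · simp
    · exact absurd hl' evg_3
    · simp
    · exact absurd hl' evg_5
    · exact absurd hl' evg_6
    · exact absurd hl' evg_7
    · simp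
    · exact absurd hl' evg_9
  · intro hx
    rcases hx with rfl|rfl|rfl
    · exact ⟨memX2, evg_2⟩
    · exact ⟨memX4, evg_4⟩
    · exact ⟨memX8, evg_8⟩

lemma ncard_cap : (XX ∩ ll).ncard = 3 := by
  rw [capXl]
  rw [Set.ncard_insert_of_notMem (by
    simp only [Set.mem_insert_iff, Set.mem_singleton_iff]
    rintro (h|h)
    exacts [ne_2_4 h, ne_2_8 h]) ((Set.finite_singleton P8).insert P4)]
  rw [Set.ncard_insert_of_notMem (by
    simp only [Set.mem_singleton_iff]
    exact ne_4_8) (Set.finite_singleton P8)]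
  rw [Set.ncard_singleton]

lemma unused : UseSet 3 XX ll = ∅ := by
  ext A
  simp only [UseSet, Set.mem_setOf_eq, Set.mem_empty_iff_false, iff_false, not_and]
  intro hAX
  rintro ⟨p, f, hfund, hdeg1, hLeq, r, rfl⟩
  have hzl : zst ∈ ll := evg_z
  rw [hLeq] at hzl
  have hfz : eval zst f = 0 := hzl
  have hev : eval zst (f * r) = 0 := by rw [map_mul, hfz, zero_mul]
  rcases memXX A hAX with rfl|rfl|rfl|rfl|rfl|rfl|rfl|rfl|rfl|rfl
  · have hq : f * r = q0 := by
      apply eq_of_interp (f * r) q0 hfund.1 qdeg0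
      · rw [hfund.2.1, ev_0_0]
      · rw [hfund.2.2 P1 memX1 (ne_0_1.symm), ev_0_1]
      · rw [hfund.2.2 P2 memX2 (ne_0_2.symm), ev_0_2]
      · rw [hfund.2.2 P3 memX3 (ne_0_3.symm), ev_0_3]
      · rw [hfund.2.2 P4 memX4 (ne_0_4.symm), ev_0_4]
      · rw [hfund.2.2 P5 memX5 (ne_0_5.symm), ev_0_5]
      · rw [hfund.2.2 P6 memX6 (ne_0_6.symm), ev_0_6]
      · rw [hfund.2.2 P7 memX7 (ne_0_7.symm), ev_0_7]
      · rw [hfund.2.2 P8 memX8 (ne_0_8.symm), ev_0_8]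
      · rw [hfund.2.2 P9 memX9 (ne_0_9.symm), ev_0_9]
    rw [hq] at hev
    exact evz_0 hev
  · have hq : f * r = q1 := by
      apply eq_of_interp (f * r) q1 hfund.1 qdeg1
      · rw [hfund.2.2 P0 memX0 (ne_0_1), ev_1_0]
      · rw [hfund.2.1, ev_1_1]
      · rw [hfund.2.2 P2 memX2 (ne_1_2.symm), ev_1_2]
      · rw [hfund.2.2 P3 memX3 (ne_1_3.symm), ev_1_3]
      · rw [hfund.2.2 P4 memX4 (ne_1_4.symm), ev_1_4]
      · rw [hfund.2.2 P5 memX5 (ne_1_5.symm), ev_1_5]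
      · rw [hfund.2.2 P6 memX6 (ne_1_6.symm), ev_1_6]
      · rw [hfund.2.2 P7 memX7 (ne_1_7.symm), ev_1_7]
      · rw [hfund.2.2 P8 memX8 (ne_1_8.symm), ev_1_8]
      · rw [hfund.2.2 P9 memX9 (ne_1_9.symm), ev_1_9]
    rw [hq] at hev
    exact evz_1 hev
  · have hq : f * r = q2 := by
      apply eq_of_interp (f * r) q2 hfund.1 qdeg2
      · rw [hfund.2.2 P0 memX0 (ne_0_2), ev_2_0]
      · rw [hfund.2.2 P1 memX1 (ne_1_2), ev_2_1]
      · rw [hfund.2.1, ev_2_2]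
      · rw [hfund.2.2 P3 memX3 (ne_2_3.symm), ev_2_3]
      · rw [hfund.2.2 P4 memX4 (ne_2_4.symm), ev_2_4]
      · rw [hfund.2.2 P5 memX5 (ne_2_5.symm), ev_2_5]
      · rw [hfund.2.2 P6 memX6 (ne_2_6.symm), ev_2_6]
      · rw [hfund.2.2 P7 memX7 (ne_2_7.symm), ev_2_7]
      · rw [hfund.2.2 P8 memX8 (ne_2_8.symm), ev_2_8]
      · rw [hfund.2.2 P9 memX9 (ne_2_9.symm), ev_2_9]
    rw [hq] at hev
    exact evz_2 hev
  · have hq : f * r = q3 := by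
      apply eq_of_interp (f * r) q3 hfund.1 qdeg3
      · rw [hfund.2.2 P0 memX0 (ne_0_3), ev_3_0]
      · rw [hfund.2.2 P1 memX1 (ne_1_3), ev_3_1]
      · rw [hfund.2.2 P2 memX2 (ne_2_3), ev_3_2]
      · rw [hfund.2.1, ev_3_3]
      · rw [hfund.2.2 P4 memX4 (ne_3_4.symm), ev_3_4]
      · rw [hfund.2.2 P5 memX5 (ne_3_5.symm), ev_3_5]
      · rw [hfund.2.2 P6 memX6 (ne_3_6.symm), ev_3_6]
      · rw [hfund.2.2 P7 memX7 (ne_3_7.symm), ev_3_7]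
      · rw [hfund.2.2 P8 memX8 (ne_3_8.symm), ev_3_8]
      · rw [hfund.2.2 P9 memX9 (ne_3_9.symm), ev_3_9]
    rw [hq] at hev
    exact evz_3 hev
  · have hq : f * r = q4 := by
      apply eq_of_interp (f * r) q4 hfund.1 qdeg4
      · rw [hfund.2.2 P0 memX0 (ne_0_4), ev_4_0]
      · rw [hfund.2.2 P1 memX1 (ne_1_4), ev_4_1]
      · rw [hfund.2.2 P2 memX2 (ne_2_4), ev_4_2]
      · rw [hfund.2.2 P3 memX3 (ne_3_4), ev_4_3]
      · rw [hfund.2.1, ev_4_4]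
      · rw [hfund.2.2 P5 memX5 (ne_4_5.symm), ev_4_5]
      · rw [hfund.2.2 P6 memX6 (ne_4_6.symm), ev_4_6]
      · rw [hfund.2.2 P7 memX7 (ne_4_7.symm), ev_4_7]
      · rw [hfund.2.2 P8 memX8 (ne_4_8.symm), ev_4_8]
      · rw [hfund.2.2 P9 memX9 (ne_4_9.symm), ev_4_9]
    rw [hq] at hev
    exact evz_4 hev
  · have hq : f * r = q5 := by
      apply eq_of_interp (f * r) q5 hfund.1 qdeg5
      · rw [hfund.2.2 P0 memX0 (ne_0_5), ev_5_0]
      · rw [hfund.2.2 P1 memX1 (ne_1_5), ev_5_1]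
      · rw [hfund.2.2 P2 memX2 (ne_2_5), ev_5_2]
      · rw [hfund.2.2 P3 memX3 (ne_3_5), ev_5_3]
      · rw [hfund.2.2 P4 memX4 (ne_4_5), ev_5_4]
      · rw [hfund.2.1, ev_5_5]
      · rw [hfund.2.2 P6 memX6 (ne_5_6.symm), ev_5_6]
      · rw [hfund.2.2 P7 memX7 (ne_5_7.symm), ev_5_7]
      · rw [hfund.2.2 P8 memX8 (ne_5_8.symm), ev_5_8]
      · rw [hfund.2.2 P9 memX9 (ne_5_9.symm), ev_5_9]
    rw [hq] at hev
    exact evz_5 hev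
  · have hq : f * r = q6 := by
      apply eq_of_interp (f * r) q6 hfund.1 qdeg6
      · rw [hfund.2.2 P0 memX0 (ne_0_6), ev_6_0]
      · rw [hfund.2.2 P1 memX1 (ne_1_6), ev_6_1]
      · rw [hfund.2.2 P2 memX2 (ne_2_6), ev_6_2]
      · rw [hfund.2.2 P3 memX3 (ne_3_6), ev_6_3]
      · rw [hfund.2.2 P4 memX4 (ne_4_6), ev_6_4]
      · rw [hfund.2.2 P5 memX5 (ne_5_6), ev_6_5]
      · rw [hfund.2.1, ev_6_6]
      · rw [hfund.2.2 P7 memX7 (ne_6_7.symm), ev_6_7]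
      · rw [hfund.2.2 P8 memX8 (ne_6_8.symm), ev_6_8]
      · rw [hfund.2.2 P9 memX9 (ne_6_9.symm), ev_6_9]
    rw [hq] at hev
    exact evz_6 hev
  · have hq : f * r = q7 := by
      apply eq_of_interp (f * r) q7 hfund.1 qdeg7
      · rw [hfund.2.2 P0 memX0 (ne_0_7), ev_7_0]
      · rw [hfund.2.2 P1 memX1 (ne_1_7), ev_7_1]
      · rw [hfund.2.2 P2 memX2 (ne_2_7), ev_7_2]
      · rw [hfund.2.2 P3 memX3 (ne_3_7), ev_7_3]
      · rw [hfund.2.2 P4 memX4 (ne_4_7), ev_7_4]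
      · rw [hfund.2.2 P5 memX5 (ne_5_7), ev_7_5]
      · rw [hfund.2.2 P6 memX6 (ne_6_7), ev_7_6]
      · rw [hfund.2.1, ev_7_7]
      · rw [hfund.2.2 P8 memX8 (ne_7_8.symm), ev_7_8]
      · rw [hfund.2.2 P9 memX9 (ne_7_9.symm), ev_7_9]
    rw [hq] at hev
    exact evz_7 hev
  · have hq : f * r = q8 := by
      apply eq_of_interp (f * r) q8 hfund.1 qdeg8
      · rw [hfund.2.2 P0 memX0 (ne_0_8), ev_8_0]
      · rw [hfund.2.2 P1 memX1 (ne_1_8), ev_8_1]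
      · rw [hfund.2.2 P2 memX2 (ne_2_8), ev_8_2]
      · rw [hfund.2.2 P3 memX3 (ne_3_8), ev_8_3]
      · rw [hfund.2.2 P4 memX4 (ne_4_8), ev_8_4]
      · rw [hfund.2.2 P5 memX5 (ne_5_8), ev_8_5]
      · rw [hfund.2.2 P6 memX6 (ne_6_8), ev_8_6]
      · rw [hfund.2.2 P7 memX7 (ne_7_8), ev_8_7]
      · rw [hfund.2.1, ev_8_8]
      · rw [hfund.2.2 P9 memX9 (ne_8_9.symm), ev_8_9]
    rw [hq] at hev
    exact evz_8 hev
  · have hq : f * r = q9 := by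
      apply eq_of_interp (f * r) q9 hfund.1 qdeg9
      · rw [hfund.2.2 P0 memX0 (ne_0_9), ev_9_0]
      · rw [hfund.2.2 P1 memX1 (ne_1_9), ev_9_1]
      · rw [hfund.2.2 P2 memX2 (ne_2_9), ev_9_2]
      · rw [hfund.2.2 P3 memX3 (ne_3_9), ev_9_3]
      · rw [hfund.2.2 P4 memX4 (ne_4_9), ev_9_4]
      · rw [hfund.2.2 P5 memX5 (ne_5_9), ev_9_5]
      · rw [hfund.2.2 P6 memX6 (ne_6_9), ev_9_6]
      · rw [hfund.2.2 P7 memX7 (ne_7_9), ev_9_7]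
      · rw [hfund.2.2 P8 memX8 (ne_8_9), ev_9_8]
      · rw [hfund.2.1, ev_9_9]
    rw [hq] at hev
    exact evz_9 hev

end AuxGC3

end AuxGC3

/-- There exist a `GC_3` set `X` and a `3`-node line `ℓ` of `X` that is
used by no node of `X`. -/
theorem exists_GC3_with_unused_threeNodeLine :
    ∃ X ℓ : Set Pt, IsGC 3 X ∧ IsNodeLine 3 X ℓ ∧ UseSet 3 X ℓ = ∅ := by
  refine ⟨AuxGC3.XX, AuxGC3.ll, AuxGC3.isGCXX, ⟨⟨AuxGC3.g, AuxGC3.g_deg, rfl⟩, AuxGC3.ncard_cap⟩, AuxGC3.unused⟩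
end

section
/- Let X be a GC_3 set and let ℓ be a 3-node line of X. Then the number of nodes of X that use ℓ is exactly 3, exactly 1, or exactly 0. -/
open MvPolynomial

/-!
Seven nodes lie off `ℓ`. In a `GC_3` set a node `A` uses `ℓ` exactly when the six other nodes
off `ℓ` lie on two lines missing `A`: then `ℓ` is a factor line of the fundamental polynomial of
`A` and the other two factors are such lines, and conversely `f_ℓ` times two such lines is, up to
scaling, that fundamental polynomial. A line carries at most four nodes. If four nodes off `ℓ`
lie on a line `g`, the users are exactly the three other nodes off `ℓ`: two lines covering three
points of `g` must contain `g`, and a node off `g` uses `g` together with the line through the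
remaining two. Otherwise a user's two lines carry three nodes each, and two users `A`, `B`
cannot coexist: one line of `B` contains the line of `A` missing `B`, so the other line of `B`
passes through the two nodes of `A`'s line through `B` other than `B`, hence through `B`.
-/

def zeroSet (g : BPoly) : Set Pt := {x | eval x g = 0}

@[simp] theorem mem_zeroSet {g : BPoly} {x : Pt} : x ∈ zeroSet g ↔ eval x g = 0 := Iff.rfl

theorem zeroSet_mul (g h : BPoly) : zeroSet (g * h) = zeroSet g ∪ zeroSet h := by
  ext x
  simp

section Lines

open Finsupp in
theorem support_subset_of_totalDegree_le_one {g : BPoly} (hg : g.totalDegree ≤ 1) :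
    g.support ⊆ {0, single 0 1, single 1 1} := by
  intro d hd
  have hdeg : d 0 + d 1 ≤ 1 := by
    have := (le_totalDegree hd).trans hg
    rwa [Finsupp.sum_fintype _ _ (fun _ => rfl), Fin.sum_univ_two] at this
  have hd : d = single 0 (d 0) + single 1 (d 1) := by
    ext i; fin_cases i <;> simp
  rw [hd]
  rcases Nat.le_one_iff_eq_zero_or_eq_one.mp (le_of_add_le_left hdeg) with h | h <;>
  rcases Nat.le_one_iff_eq_zero_or_eq_one.mp (le_of_add_le_right hdeg) with h' | h' <;>
  simp [h, h'] at hdeg ⊢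

theorem exists_eval_eq_of_totalDegree_le_one {g : BPoly} (hg : g.totalDegree ≤ 1) :
    ∃ a b c : ℝ, ∀ x : Pt, eval x g = a + b * x 0 + c * x 1 := by
  refine ⟨coeff 0 g, coeff (Finsupp.single 0 1) g, coeff (Finsupp.single 1 1) g, fun x => ?_⟩
  rw [eval_eq', Finset.sum_subset (support_subset_of_totalDegree_le_one hg)
    (fun d _ hd => by simp [notMem_support_iff.mp hd])]
  rw [Finset.sum_insert (by simp [eq_comm]),
    Finset.sum_insert (by simp [Finsupp.single_eq_single_iff])]
  simp [Fin.prod_univ_two, add_assoc]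

theorem exists_eval_eq_of_totalDegree_eq_one {g : BPoly} (hg : g.totalDegree = 1) :
    ∃ a b c : ℝ, (b ≠ 0 ∨ c ≠ 0) ∧ ∀ x : Pt, eval x g = a + b * x 0 + c * x 1 := by
  obtain ⟨a, b, c, hgx⟩ := exists_eval_eq_of_totalDegree_le_one hg.le
  refine ⟨a, b, c, ?_, hgx⟩
  by_contra! hbc
  have : g = C a := MvPolynomial.funext fun x => by simp [hgx, hbc]
  rw [this, totalDegree_C] at hg
  exact zero_ne_one hg

theorem ne_zero_of_totalDegree_eq_one {g : BPoly} (hg : g.totalDegree = 1) : g ≠ 0 := by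
  rintro rfl
  simp at hg

theorem sub_ne_zero_or_sub_ne_zero_of_ne {P Q : Pt} (hPQ : P ≠ Q) :
    Q 0 - P 0 ≠ 0 ∨ Q 1 - P 1 ≠ 0 := by
  by_contra! h
  exact hPQ (funext fun i => by fin_cases i <;> simp <;> linarith [h.1, h.2])

theorem cross_eq_zero_of_mem_zeroSet {g : BPoly} (hg : g.totalDegree = 1) {P Q R : Pt}
    (hP : P ∈ zeroSet g) (hQ : Q ∈ zeroSet g) (hR : R ∈ zeroSet g) :
    (Q 0 - P 0) * (R 1 - P 1) - (Q 1 - P 1) * (R 0 - P 0) = 0 := by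
  obtain ⟨a, b, c, hbc, hgx⟩ := exists_eval_eq_of_totalDegree_eq_one hg
  simp only [mem_zeroSet, hgx] at hP hQ hR
  rcases hbc with hb | hc
  · refine (mul_eq_zero.mp ?_).resolve_left hb
    linear_combination (R 1 - P 1) * (hQ - hP) - (Q 1 - P 1) * (hR - hP)
  · refine (mul_eq_zero.mp ?_).resolve_left hc
    linear_combination (Q 0 - P 0) * (hR - hP) - (R 0 - P 0) * (hQ - hP)

theorem mem_zeroSet_of_cross_eq_zero {h : BPoly} (hh : h.totalDegree ≤ 1) {P Q R : Pt}
    (hPQ : P ≠ Q) (hPQR : (Q 0 - P 0) * (R 1 - P 1) - (Q 1 - P 1) * (R 0 - P 0) = 0)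
    (hP : P ∈ zeroSet h) (hQ : Q ∈ zeroSet h) : R ∈ zeroSet h := by
  obtain ⟨a, b, c, hhx⟩ := exists_eval_eq_of_totalDegree_le_one hh
  simp only [mem_zeroSet, hhx] at hP hQ ⊢
  rcases sub_ne_zero_or_sub_ne_zero_of_ne hPQ with hv | hv
  · refine (mul_eq_zero.mp ?_).resolve_left hv
    linear_combination (R 0 - P 0) * (hQ - hP) + (Q 0 - P 0) * hP + c * hPQR
  · refine (mul_eq_zero.mp ?_).resolve_left hv
    linear_combination (R 1 - P 1) * (hQ - hP) + (Q 1 - P 1) * hP - b * hPQR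

theorem zeroSet_subset_of_two_common_zeros {g h : BPoly} (hg : g.totalDegree = 1)
    (hh : h.totalDegree ≤ 1) {P Q : Pt} (hPQ : P ≠ Q) (hP : P ∈ zeroSet g ∩ zeroSet h)
    (hQ : Q ∈ zeroSet g ∩ zeroSet h) : zeroSet g ⊆ zeroSet h := fun _ hR =>
  mem_zeroSet_of_cross_eq_zero hh hPQ (cross_eq_zero_of_mem_zeroSet hg hP.1 hQ.1 hR) hP.2 hQ.2

theorem infinite_zeroSet {g : BPoly} (hg : g.totalDegree = 1) : (zeroSet g).Infinite := by
  obtain ⟨a, b, c, hbc, hgx⟩ := exists_eval_eq_of_totalDegree_eq_one hg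
  rcases hbc with hb | hc
  · refine Set.infinite_of_injective_forall_mem (f := fun t : ℝ => ![(-a - c * t) / b, t])
      (fun s t hst => by simpa using congrFun hst 1) fun t => ?_
    simp [hgx]
    field_simp
    ring
  · refine Set.infinite_of_injective_forall_mem (f := fun t : ℝ => ![t, (-a - b * t) / c])
      (fun s t hst => by simpa using congrFun hst 0) fun t => ?_
    simp [hgx]
    field_simp
    ring

theorem zeroSet_subset_of_zeroSet_subset {g h : BPoly} (hg : g.totalDegree = 1)
    (hh : h.totalDegree = 1) (hgh : zeroSet g ⊆ zeroSet h) : zeroSet h ⊆ zeroSet g := by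
  obtain ⟨P, hP, Q, hQ, hPQ⟩ := (infinite_zeroSet hg).nontrivial
  exact zeroSet_subset_of_two_common_zeros hh hg.le hPQ ⟨hgh hP, hP⟩ ⟨hgh hQ, hQ⟩

theorem exists_line_through {P Q : Pt} (hPQ : P ≠ Q) :
    ∃ e : BPoly, e ≠ 0 ∧ e.totalDegree ≤ 1 ∧ P ∈ zeroSet e ∧ Q ∈ zeroSet e := by
  set e : BPoly := C (Q 1 - P 1) * (X 0 - C (P 0)) - C (Q 0 - P 0) * (X 1 - C (P 1))
  refine ⟨e, fun he => ?_, ?_, by simp [e], by simp [e]; ring⟩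
  · have h := congrArg (eval ![P 0 + (Q 1 - P 1), P 1 - (Q 0 - P 0)]) he
    simp [e] at h
    rcases sub_ne_zero_or_sub_ne_zero_of_ne hPQ with hv | hv
    · nlinarith [sq_pos_of_ne_zero hv, sq_nonneg (Q 1 - P 1)]
    · nlinarith [sq_pos_of_ne_zero hv, sq_nonneg (Q 0 - P 0)]
  · refine (totalDegree_sub _ _).trans (max_le ?_ ?_) <;>
    refine (totalDegree_mul _ _).trans ?_ <;>
    simp only [totalDegree_C, zero_add] <;>
    refine (totalDegree_sub _ _).trans (max_le ?_ ?_) <;> simp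

theorem exists_zeroSet_subset_of_ncard_lt {n : ℕ} {g : BPoly} {f : Fin n → BPoly}
    (hg : g.totalDegree = 1) (hf : ∀ i, (f i).totalDegree ≤ 1) {S : Set Pt}
    (hS : n < S.ncard) (hSg : S ⊆ zeroSet g) (hSf : S ⊆ ⋃ i, zeroSet (f i)) :
    ∃ i, zeroSet g ⊆ zeroSet (f i) := by
  have hSf : ∀ x ∈ S, ∃ i, x ∈ zeroSet (f i) := fun x hx => Set.mem_iUnion.mp (hSf hx)
  have : Nonempty (Fin n) := by
    obtain ⟨x, hx⟩ := Set.nonempty_of_ncard_ne_zero (s := S) (by omega)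
    exact ⟨(hSf x hx).choose⟩
  choose! κ hκ using hSf
  obtain ⟨P, hP, Q, hQ, hPQ, hκPQ⟩ := Set.exists_ne_map_eq_of_ncard_lt_of_maps_to
    (t := Set.univ) (by simpa using hS) fun x _ => Set.mem_univ (κ x)
  exact ⟨κ P, zeroSet_subset_of_two_common_zeros hg (hf _) hPQ ⟨hSg hP, hκ P hP⟩
    ⟨hSg hQ, hκPQ ▸ hκ Q hQ⟩⟩

theorem zeroSet_subset_or_of_two_lt_ncard {g h₁ h₂ : BPoly} (hg : g.totalDegree = 1)
    (hh₁ : h₁.totalDegree ≤ 1) (hh₂ : h₂.totalDegree ≤ 1) {S : Set Pt} (hS : 2 < S.ncard)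
    (hSg : S ⊆ zeroSet g) (hSh : S ⊆ zeroSet h₁ ∪ zeroSet h₂) :
    zeroSet g ⊆ zeroSet h₁ ∨ zeroSet g ⊆ zeroSet h₂ := by
  obtain ⟨i, hi⟩ := exists_zeroSet_subset_of_ncard_lt (f := ![h₁, h₂]) hg
    (fun i => by fin_cases i <;> assumption) hS hSg fun x hx => by
      simpa [Fin.exists_fin_two] using hSh hx
  fin_cases i
  exacts [Or.inl hi, Or.inr hi]

end Lines

section Poised

variable {n : ℕ} {X : Set Pt}

theorem IsPoised.finite (hX : IsPoised n X) : X.Finite :=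
  Set.finite_of_ncard_pos <| by rw [hX.1]; exact Nat.div_pos (by nlinarith) two_pos

theorem IsPoised.eq_zero_of_eval_eq_zero (hX : IsPoised n X) {q : BPoly}
    (hq : q.totalDegree ≤ n) (hqX : ∀ A ∈ X, eval A q = 0) : q = 0 := by
  obtain ⟨p, -, hp⟩ := hX.2 0
  exact (hp q ⟨hq, hqX⟩).trans (hp 0 ⟨by simp, by simp⟩).symm

theorem IsPoised.isFund_unique (hX : IsPoised n X) {A : Pt} {p q : BPoly}
    (hp : IsFund n X A p) (hq : IsFund n X A q) : p = q := by
  rw [← sub_eq_zero]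
  refine hX.eq_zero_of_eval_eq_zero ((totalDegree_sub _ _).trans (max_le hp.1 hq.1)) ?_
  intro B hB
  rcases eq_or_ne B A with rfl | hBA
  · simp [hp.2.1, hq.2.1]
  · simp [hp.2.2 B hB hBA, hq.2.2 B hB hBA]

theorem exists_mem_zeroSet_of_isFund_prod {A B : Pt} {F : Fin n → BPoly}
    (hF : IsFund n X A (∏ i, F i)) (hB : B ∈ X) (hBA : B ≠ A) : ∃ i, B ∈ zeroSet (F i) := by
  simpa [eval_prod, Finset.prod_eq_zero_iff] using hF.2.2 B hB hBA

theorem notMem_zeroSet_of_isFund_prod {A : Pt} {F : Fin n → BPoly}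
    (hF : IsFund n X A (∏ i, F i)) (i : Fin n) : A ∉ zeroSet (F i) := fun hi => by
  have hA := hF.2.1
  rw [eval_prod, Finset.prod_eq_zero (Finset.mem_univ i) (mem_zeroSet.mp hi)] at hA
  exact zero_ne_one hA

theorem IsGC.ncard_inter_zeroSet_le (hX : IsGC n X) {g : BPoly} (hg : g.totalDegree = 1) :
    (X ∩ zeroSet g).ncard ≤ n + 1 := by
  by_contra! hlt
  obtain ⟨B, hB⟩ := Set.nonempty_of_ncard_ne_zero (s := X ∩ zeroSet g) (by omega)
  obtain ⟨p, hp, F, hF, rfl⟩ := hX.2 B hB.1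
  obtain ⟨i, hi⟩ := exists_zeroSet_subset_of_ncard_lt hg (fun i => (hF i).le)
    (S := (X ∩ zeroSet g) \ {B}) (by rw [Set.ncard_sdiff_singleton_of_mem hB]; omega)
    (fun x hx => hx.1.2) fun x hx =>
      Set.mem_iUnion.mpr (exists_mem_zeroSet_of_isFund_prod hp hx.1.1 hx.2)
  exact notMem_zeroSet_of_isFund_prod hp i (hi hB.2)

end Poised

section Uses

variable {n : ℕ} {X ℓ : Set Pt} {A : Pt}

theorem notMem_of_mem_useSet (hA : A ∈ UseSet n X ℓ) : A ∉ ℓ := by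
  obtain ⟨-, p, f, hp, -, rfl, q, rfl⟩ := hA
  intro hAf
  simpa [show eval A f = 0 from hAf] using hp.2.1

theorem IsGC.exists_lines_of_mem_useSet {m : ℕ} (hX : IsGC (m + 1) X)
    (hA : A ∈ UseSet (m + 1) X ℓ) :
    ∃ g : Fin m → BPoly, (∀ j, (g j).totalDegree = 1) ∧ (∀ j, A ∉ zeroSet (g j)) ∧
      (X \ ℓ) \ {A} ⊆ ⋃ j, zeroSet (g j) := by
  obtain ⟨hAX, p, f, hp, hf, rfl, hfp⟩ := hA
  obtain ⟨p', hp', F, hF, rfl⟩ := hX.2 A hAX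
  obtain rfl : p = ∏ i, F i := hX.1.isFund_unique hp hp'
  obtain ⟨S, hSℓ, -, hS⟩ := (infinite_zeroSet hf).exists_subset_ncard_eq (m + 2)
  obtain ⟨i, hi⟩ := exists_zeroSet_subset_of_ncard_lt hf (fun i => (hF i).le)
    (by omega : m + 1 < S.ncard) hSℓ fun x hx => by
      have hx : eval x (∏ i, F i) = 0 := by
        obtain ⟨q, hq⟩ := hfp
        rw [hq, eval_mul, show eval x f = 0 from hSℓ hx, zero_mul]
      simpa [eval_prod, Finset.prod_eq_zero_iff] using hx
  have hFi := zeroSet_subset_of_zeroSet_subset hf (hF i) hi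
  refine ⟨fun j => F (i.succAbove j), fun j => hF _,
    fun j => notMem_zeroSet_of_isFund_prod hp _, fun B ⟨hB, hBA⟩ => ?_⟩
  obtain ⟨k, hk⟩ := exists_mem_zeroSet_of_isFund_prod hp hB.1 hBA
  obtain ⟨j, rfl⟩ := Fin.exists_succAbove_eq (x := k) (y := i) fun hki => hB.2 (hFi (hki ▸ hk))
  exact Set.mem_iUnion.mpr ⟨j, hk⟩

theorem IsPoised.mem_useSet (hX : IsPoised n X) (hℓ : IsLine ℓ) (hA : A ∈ X \ ℓ)
    {q : BPoly} (hq0 : q ≠ 0) (hq : q.totalDegree < n)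
    (hqX : (X \ ℓ) \ {A} ⊆ zeroSet q) : A ∈ UseSet n X ℓ := by
  obtain ⟨f, hf, rfl⟩ := hℓ
  have hfq : (f * q).totalDegree ≤ n := (totalDegree_mul _ _).trans (by omega)
  have hfqX : ∀ B ∈ X, B ≠ A → eval B (f * q) = 0 := fun B hB hBA => by
    by_cases hBf : eval B f = 0
    · simp [hBf]
    · simp [show eval B q = 0 from hqX ⟨⟨hB, hBf⟩, hBA⟩]
  have hfqA : eval A (f * q) ≠ 0 := fun hA0 =>
    mul_ne_zero (ne_zero_of_totalDegree_eq_one hf) hq0 <|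
      hX.eq_zero_of_eval_eq_zero hfq fun B hB => by
        rcases eq_or_ne B A with rfl | hBA
        · exact hA0
        · exact hfqX B hB hBA
  refine ⟨hA.1, C (eval A (f * q))⁻¹ * (f * q), f, ⟨?_, ?_, ?_⟩, hf, rfl,
    Dvd.dvd.mul_left (dvd_mul_right f q) _⟩
  · rw [← zero_add n, ← totalDegree_C (eval A (f * q))⁻¹]
    exact (totalDegree_mul _ _).trans (add_le_add le_rfl hfq)
  · simp only [eval_mul, eval_C] at hfqA ⊢
    exact inv_mul_cancel₀ hfqA
  · intro B hB hBA
    rw [eval_mul, hfqX B hB hBA, mul_zero]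

end Uses

section ThreeNodeLine

structure TwoLineCover (S : Set Pt) (A : Pt) (g₁ g₂ : BPoly) : Prop where
  totalDegree_left : g₁.totalDegree = 1
  totalDegree_right : g₂.totalDegree = 1
  notMem_left : A ∉ zeroSet g₁
  notMem_right : A ∉ zeroSet g₂
  subset_union : S \ {A} ⊆ zeroSet g₁ ∪ zeroSet g₂

variable {X ℓ Y : Set Pt} {A B : Pt} {g₁ g₂ h₁ h₂ : BPoly}

theorem TwoLineCover.symm (h : TwoLineCover Y A g₁ g₂) : TwoLineCover Y A g₂ g₁ :=
  ⟨h.totalDegree_right, h.totalDegree_left, h.notMem_right, h.notMem_left,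
    Set.union_comm (zeroSet g₁) _ ▸ h.subset_union⟩

theorem IsGC.exists_twoLineCover_of_mem_useSet (hX : IsGC 3 X) (hA : A ∈ UseSet 3 X ℓ) :
    ∃ g₁ g₂, TwoLineCover (X \ ℓ) A g₁ g₂ := by
  obtain ⟨g, hg, hgA, hcov⟩ := hX.exists_lines_of_mem_useSet hA
  exact ⟨g 0, g 1, hg 0, hg 1, hgA 0, hgA 1, fun B hB => by
    simpa [Fin.exists_fin_two] using hcov hB⟩

theorem TwoLineCover.ncard_inter_zeroSet (hc : TwoLineCover Y A g₁ g₂) (hY : Y.ncard = 7)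
    (hY4 : ∀ g : BPoly, g.totalDegree = 1 → (Y ∩ zeroSet g).ncard ≤ 3) (hA : A ∈ Y) :
    Disjoint (Y ∩ zeroSet g₁) (Y ∩ zeroSet g₂) ∧
      (Y ∩ zeroSet g₁).ncard = 3 ∧ (Y ∩ zeroSet g₂).ncard = 3 := by
  have hfin : Y.Finite := Set.finite_of_ncard_ne_zero (by omega)
  have h6 : 6 ≤ (Y ∩ zeroSet g₁ ∪ Y ∩ zeroSet g₂).ncard := by
    have hsub : Y \ {A} ⊆ Y ∩ zeroSet g₁ ∪ Y ∩ zeroSet g₂ := by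
      rw [← Set.inter_union_distrib_left]
      exact Set.subset_inter Set.sdiff_subset hc.subset_union
    have := Set.ncard_le_ncard hsub
      (hfin.subset (Set.union_subset Set.inter_subset_left Set.inter_subset_left))
    rwa [Set.ncard_sdiff_singleton_of_mem hA, hY] at this
  have hsum := Set.ncard_union_add_ncard_inter _ _ (hfin.inter_of_left (zeroSet g₁))
    (hfin.inter_of_left (zeroSet g₂))
  have h₁ := hY4 g₁ hc.totalDegree_left
  have h₂ := hY4 g₂ hc.totalDegree_right
  refine ⟨Set.disjoint_iff_inter_eq_empty.mpr ?_, by omega, by omega⟩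
  exact (Set.ncard_eq_zero ((hfin.inter_of_left _).inter_of_left _)).mp (by omega)

theorem TwoLineCover.eq (hY : Y.ncard = 7)
    (hY4 : ∀ g : BPoly, g.totalDegree = 1 → (Y ∩ zeroSet g).ncard ≤ 3) (hA : A ∈ Y) (hB : B ∈ Y)
    (hcA : TwoLineCover Y A g₁ g₂) (hcB : TwoLineCover Y B h₁ h₂) : A = B := by
  by_contra hAB
  wlog hBg₁ : B ∈ zeroSet g₁ generalizing g₁ g₂
  · exact this hcA.symm ((hcA.subset_union ⟨hB, Ne.symm hAB⟩).resolve_left hBg₁)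
  obtain ⟨hdisj, hZ₁, hZ₂⟩ := hcA.ncard_inter_zeroSet hY hY4 hA
  have hB₁ : B ∈ Y ∩ zeroSet g₁ := ⟨hB, hBg₁⟩
  have hfin : Y.Finite := Set.finite_of_ncard_ne_zero (by omega)
  wlog hsub : zeroSet g₂ ⊆ zeroSet h₁ generalizing h₁ h₂
  · refine this hcB.symm ((zeroSet_subset_or_of_two_lt_ncard hcA.totalDegree_right
      hcB.totalDegree_left.le hcB.totalDegree_right.le (by omega) Set.inter_subset_right
      fun x hx => hcB.subset_union ⟨hx.1, ?_⟩).resolve_left hsub)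
    rintro rfl
    exact Set.disjoint_left.mp hdisj hB₁ hx
  have hh₁ : Y ∩ zeroSet h₁ = Y ∩ zeroSet g₂ :=
    (Set.eq_of_subset_of_ncard_le (Set.inter_subset_inter_right _ hsub)
      (hZ₂ ▸ hY4 h₁ hcB.totalDegree_left) (hfin.inter_of_left _)).symm
  have hh₂ : (Y ∩ zeroSet g₁) \ {B} ⊆ zeroSet h₂ := fun x hx =>
    (hcB.subset_union ⟨hx.1.1, hx.2⟩).resolve_left fun hx₁ =>
      Set.disjoint_left.mp hdisj hx.1 (hh₁ ▸ ⟨hx.1.1, hx₁⟩)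
  obtain ⟨u, v, huv, huvZ⟩ := (Set.ncard_eq_two (s := (Y ∩ zeroSet g₁) \ {B})).mp <| by
    rw [Set.ncard_sdiff_singleton_of_mem hB₁, hZ₁]
  have hu : u ∈ (Y ∩ zeroSet g₁) \ {B} := huvZ ▸ Set.mem_insert u {v}
  have hv : v ∈ (Y ∩ zeroSet g₁) \ {B} := huvZ ▸ Set.mem_insert_of_mem u rfl
  exact hcB.notMem_right <| zeroSet_subset_of_two_common_zeros hcA.totalDegree_left
    hcB.totalDegree_right.le huv ⟨hu.1.2, hh₂ hu⟩ ⟨hv.1.2, hh₂ hv⟩ hBg₁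

theorem IsGC.useSet_subsingleton (hX : IsGC 3 X) (hY : (X \ ℓ).ncard = 7)
    (hY4 : ∀ g : BPoly, g.totalDegree = 1 → ((X \ ℓ) ∩ zeroSet g).ncard ≤ 3) :
    (UseSet 3 X ℓ).Subsingleton := fun A hA B hB => by
  obtain ⟨g₁, g₂, hcA⟩ := hX.exists_twoLineCover_of_mem_useSet hA
  obtain ⟨h₁, h₂, hcB⟩ := hX.exists_twoLineCover_of_mem_useSet hB
  exact hcA.eq hY hY4 ⟨hA.1, notMem_of_mem_useSet hA⟩ ⟨hB.1, notMem_of_mem_useSet hB⟩ hcB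

theorem IsGC.notMem_useSet_of_collinear (hX : IsGC 3 X) {g : BPoly} (hg : g.totalDegree = 1)
    (hAg : A ∈ zeroSet g) (h3 : 2 < (((X \ ℓ) ∩ zeroSet g) \ {A}).ncard) :
    A ∉ UseSet 3 X ℓ := fun hA => by
  obtain ⟨g₁, g₂, hc⟩ := hX.exists_twoLineCover_of_mem_useSet hA
  rcases zeroSet_subset_or_of_two_lt_ncard hg hc.totalDegree_left.le hc.totalDegree_right.le h3
    (fun x hx => hx.1.2) (fun x hx => hc.subset_union ⟨hx.1.1, hx.2⟩) with h | h
  exacts [hc.notMem_left (h hAg), hc.notMem_right (h hAg)]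

theorem IsPoised.mem_useSet_of_ncard_sdiff_eq_two (hX : IsPoised 3 X) (hℓ : IsLine ℓ)
    {g : BPoly} (hg : g.totalDegree = 1) (hA : A ∈ (X \ ℓ) \ zeroSet g)
    (h2 : (((X \ ℓ) \ zeroSet g) \ {A}).ncard = 2) : A ∈ UseSet 3 X ℓ := by
  obtain ⟨u, v, huv, huvT⟩ := Set.ncard_eq_two.mp h2
  obtain ⟨e, he0, he, hue, hve⟩ := exists_line_through huv
  refine hX.mem_useSet hℓ hA.1 (mul_ne_zero (ne_zero_of_totalDegree_eq_one hg) he0)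
    ((totalDegree_mul _ _).trans_lt (by omega)) fun B hB => ?_
  rw [zeroSet_mul]
  by_cases hBg : B ∈ zeroSet g
  · exact Or.inl hBg
  · have hBT : B ∈ ((X \ ℓ) \ zeroSet g) \ {A} := ⟨⟨hB.1, hBg⟩, hB.2⟩
    rw [huvT] at hBT
    rcases hBT with rfl | rfl
    exacts [Or.inr hue, Or.inr hve]

theorem IsGC.ncard_useSet_of_four_collinear (hX : IsGC 3 X) (hℓ : IsLine ℓ)
    (hY : (X \ ℓ).ncard = 7) {g : BPoly} (hg : g.totalDegree = 1)
    (h4 : 4 ≤ ((X \ ℓ) ∩ zeroSet g).ncard) : (UseSet 3 X ℓ).ncard = 3 := by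
  have hfin := hX.1.finite
  have hM : ((X \ ℓ) ∩ zeroSet g).ncard = 4 :=
    le_antisymm ((Set.ncard_le_ncard (Set.inter_subset_inter_left _ Set.sdiff_subset)
      (hfin.inter_of_left _)).trans (hX.ncard_inter_zeroSet_le hg)) h4
  have hT : ((X \ ℓ) \ zeroSet g).ncard = 3 := by
    have := Set.ncard_inter_add_ncard_sdiff_eq_ncard (X \ ℓ) (zeroSet g) hfin.sdiff
    omega
  suffices UseSet 3 X ℓ = (X \ ℓ) \ zeroSet g by rw [this, hT]
  ext A
  refine ⟨fun hA => ?_, fun hA => hX.1.mem_useSet_of_ncard_sdiff_eq_two hℓ hg hA ?_⟩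
  · have hAY : A ∈ X \ ℓ := ⟨hA.1, notMem_of_mem_useSet hA⟩
    refine ⟨hAY, fun hAg => hX.notMem_useSet_of_collinear hg hAg ?_ hA⟩
    rw [Set.ncard_sdiff_singleton_of_mem (show A ∈ (X \ ℓ) ∩ zeroSet g from ⟨hAY, hAg⟩), hM]
    norm_num
  · rw [Set.ncard_sdiff_singleton_of_mem hA, hT]

end ThreeNodeLine

/-- For a `GC_3` set `X` and a `3`-node line `ℓ`, the number of nodes
using `ℓ` is `3`, `1`, or `0`. -/
theorem GC3_threeNodeLine_useSet_card (X ℓ : Set Pt) (hX : IsGC 3 X)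
    (hℓ : IsNodeLine 3 X ℓ) :
    (UseSet 3 X ℓ).ncard = 3 ∨ (UseSet 3 X ℓ).ncard = 1 ∨ (UseSet 3 X ℓ).ncard = 0 := by
  have hY : (X \ ℓ).ncard = 7 := by
    have := Set.ncard_inter_add_ncard_sdiff_eq_ncard X ℓ hX.1.finite
    rw [hℓ.2, hX.1.1] at this
    omega
  by_cases h4 : ∃ g : BPoly, g.totalDegree = 1 ∧ 4 ≤ ((X \ ℓ) ∩ zeroSet g).ncard
  · obtain ⟨g, hg, h4⟩ := h4
    exact Or.inl (hX.ncard_useSet_of_four_collinear hℓ.1 hY hg h4)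
  · push Not at h4
    have hsub := hX.useSet_subsingleton hY fun g hg => Nat.le_of_lt_succ (h4 g hg)
    have := (Set.ncard_le_one hsub.finite).mpr hsub
    omega
end
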